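/- arXiv:2602.19960 — 9 statements merged into one kernel-verified Lean document; each statement's English description precedes it below -/
import Mathlib

section
/- If A ⊆ ω is m-rigid, then the many-one degree of A contains an infinite antichain of 1-degrees; that is, there exists a family (B_i)_{i∈ω} of subsets of ω such that B_i ≡_m A for every i, and for all i ≠ j neither B_i ≤_1 B_j nor B_j ≤_1 B_i. -/
/-- `A` is m-rigid: every total computable m-autoreduction of `A`
(i.e. `k` with `∀ x, x ∈ A ↔ k x ∈ A`) is eventually the identity. -/
def MRigid (A : Set ℕ) : Prop :=
  ∀ k : ℕ → ℕ, Computable k → (∀ x, x ∈ A ↔ k x ∈ A) → {x | k x ≠ x}.Finite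

/-- Multiplicity function: the fiber over `x` in `B i` has size 2 if
`x.unpair.1 = i`, and size 1 otherwise. -/
def sfun (i x : ℕ) : ℕ := if x.unpair.1 = i then 2 else 1

lemma sfun_pos (i x : ℕ) : 0 < sfun i x := by
  unfold sfun; split <;> omega

lemma sfun_primrec (i : ℕ) : Primrec (sfun i) :=
  Primrec.ite (Primrec.eq.comp (Primrec.fst.comp Primrec.unpair) (Primrec.const i))
    (Primrec.const 2) (Primrec.const 1)

/-- The padded copies of `A`. -/
def Bset (A : Set ℕ) (i : ℕ) : Set ℕ :=
  {z | z.unpair.2 < sfun i z.unpair.1 ∧ z.unpair.1 ∈ A}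

lemma mem_Bset {A : Set ℕ} {i z : ℕ} :
    z ∈ Bset A i ↔ z.unpair.2 < sfun i z.unpair.1 ∧ z.unpair.1 ∈ A := Iff.rfl

/-- The "decoding" function used to pull members of `B j` back to `A`. -/
def hfun (j b w : ℕ) : ℕ :=
  if w.unpair.2 < sfun j w.unpair.1 then w.unpair.1 else b

lemma hfun_primrec (j b : ℕ) : Primrec (hfun j b) :=
  Primrec.ite
    (Primrec.nat_lt.comp (Primrec.snd.comp Primrec.unpair)
      ((sfun_primrec j).comp (Primrec.fst.comp Primrec.unpair)))
    (Primrec.fst.comp Primrec.unpair) (Primrec.const b)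

lemma hfun_spec {A : Set ℕ} {j b w : ℕ} (hb : b ∉ A) :
    (w ∈ Bset A j) ↔ hfun j b w ∈ A := by
  unfold hfun
  rw [mem_Bset]
  split_ifs with h
  · simp [h]
  · simp [h, hb]

lemma hfun_eq {j b w x : ℕ} (h : hfun j b w = x) (hxb : x ≠ b)
    (hxj : x.unpair.1 ≠ j) : w = Nat.pair x 0 := by
  unfold hfun at h
  split_ifs at h with hc
  · have h1 : sfun j w.unpair.1 = 1 := by
      simp only [sfun, h]
      simp [hxj]
    rw [h1] at hc
    have h2 : w.unpair.2 = 0 := by omega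
    rw [← Nat.pair_unpair w, h, h2]
  · exact absurd h.symm hxb

theorem bset_manyOneEquiv {A : Set ℕ} {i b : ℕ} (hb : b ∉ A) :
    ManyOneEquiv (· ∈ Bset A i) (· ∈ A) := by
  constructor
  · exact ⟨hfun i b, (hfun_primrec i b).to_comp, fun z => hfun_spec hb⟩
  · refine ⟨fun x => Nat.pair x 0, ?_, fun x => ?_⟩
    · exact (Primrec₂.natPair.comp Primrec.id (Primrec.const 0)).to_comp
    · show x ∈ A ↔ Nat.pair x 0 ∈ Bset A i
      rw [mem_Bset, Nat.unpair_pair]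
      simp [sfun_pos]

/-- If `A` is m-rigid, then the many-one degree of `A` contains an infinite
antichain of 1-degrees. -/
theorem stmt_0 (A : Set ℕ) (hA : MRigid A) :
    ∃ B : ℕ → Set ℕ,
      (∀ i, ManyOneEquiv (· ∈ B i) (· ∈ A)) ∧
      (∀ i j, i ≠ j → ¬ OneOneReducible (· ∈ B i) (· ∈ B j)) := by
  -- A is neither empty nor all of ℕ
  have hsucc : Computable Nat.succ := Computable.succ
  obtain ⟨b, hb⟩ : ∃ b, b ∉ A := by
    by_contra h
    push_neg at h
    have hfin := hA Nat.succ hsucc (fun x => by simp [h])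
    have heq : ({x | Nat.succ x ≠ x} : Set ℕ) = Set.univ := by
      ext x; simp
    rw [heq] at hfin
    exact Set.infinite_univ hfin
  refine ⟨Bset A, fun i => bset_manyOneEquiv hb, fun i j hij ⟨f, hf, hinj, hred⟩ => ?_⟩
  -- build the two autoreductions
  set k0 : ℕ → ℕ := fun x => hfun j b (f (Nat.pair x 0)) with hk0
  set k1 : ℕ → ℕ := fun x =>
    if x.unpair.1 = i then hfun j b (f (Nat.pair x 1)) else x with hk1
  have hfc : Computable f := hf
  have hk0c : Computable k0 :=
    (hfun_primrec j b).to_comp.comp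
      (hfc.comp (Primrec₂.natPair.comp Primrec.id (Primrec.const 0)).to_comp)
  have hk1c : Computable k1 := by
    have hg : Primrec₂ (fun (x w : ℕ) =>
        if x.unpair.1 = i then hfun j b w else x) :=
      Primrec.ite
        (Primrec.eq.comp (Primrec.fst.comp (Primrec.unpair.comp Primrec.fst))
          (Primrec.const i))
        ((hfun_primrec j b).comp Primrec.snd) Primrec.fst
    exact hg.to_comp.comp Computable.id
      (hfc.comp (Primrec₂.natPair.comp Primrec.id (Primrec.const 1)).to_comp)
  -- key membership fact
  have key : ∀ x n, n < sfun i x → (x ∈ A ↔ hfun j b (f (Nat.pair x n)) ∈ A) := by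
    intro x n hn
    have h1 : Nat.pair x n ∈ Bset A i ↔ x ∈ A := by
      rw [mem_Bset, Nat.unpair_pair]; simp [hn]
    have h2 : Nat.pair x n ∈ Bset A i ↔ f (Nat.pair x n) ∈ Bset A j :=
      hred (Nat.pair x n)
    rw [← h1, h2]
    exact hfun_spec hb
  have hk0auto : ∀ x, x ∈ A ↔ k0 x ∈ A := fun x => key x 0 (sfun_pos i x)
  have hk1auto : ∀ x, x ∈ A ↔ k1 x ∈ A := by
    intro x
    simp only [hk1]
    split_ifs with hx
    · exact key x 1 (by simp [sfun, hx])
    · rfl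
  have hS0 := hA k0 hk0c hk0auto
  have hS1 := hA k1 hk1c hk1auto
  -- pick a large point in the i-th column
  have hDinf : Set.Infinite {x : ℕ | x.unpair.1 = i} := by
    apply Set.infinite_of_injective_forall_mem (f := fun m : ℕ => Nat.pair i m)
    · intro a c h
      have := congrArg (fun z => z.unpair.2) h
      simpa using this
    · intro m; simp [Nat.unpair_pair]
  obtain ⟨x, hxD, hxF⟩ :=
    (hDinf.diff ((hS0.union hS1).union (Set.finite_singleton b))).nonempty
  simp only [Set.mem_diff, Set.mem_setOf_eq, Set.mem_union, Set.mem_singleton_iff,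
    not_or, not_not] at hxD hxF
  obtain ⟨⟨hx0, hx1⟩, hxb⟩ := hxF
  -- both fiber points map to ⟨x,0⟩, contradicting injectivity
  have hxj : x.unpair.1 ≠ j := by rw [hxD]; exact hij
  have e0 : f (Nat.pair x 0) = Nat.pair x 0 := by
    simp only [hk0] at hx0
    exact hfun_eq hx0 hxb hxj
  have e1 : f (Nat.pair x 1) = Nat.pair x 0 := by
    simp only [hk1] at hx1
    rw [if_pos hxD] at hx1
    exact hfun_eq hx1 hxb hxj
  have : Nat.pair x 0 = Nat.pair x 1 := hinj (e0.trans e1.symm)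
  have := congrArg (fun z => z.unpair.2) this
  simp at this
end

section
/- Every m-rigid set A ⊆ ω is bi-immune: neither A nor its complement ω \ A has an infinite computable subset. -/
theorem Computable.nat_find {α : Type*} [Primcodable α] {p : α → ℕ → Bool}
    (hp : Computable₂ p) (h : ∀ a, ∃ n, p a n) : Computable fun a => Nat.find (h a) :=
  (Partrec.rfind hp.partrec₂).of_eq_tot fun a => Nat.mem_rfind.2
    ⟨by simpa using Nat.find_spec (h a), fun hm => by simpa using Nat.find_min (h a) hm⟩

theorem ComputablePred.exists_computable_lt_mem {S : Set ℕ} (hS : ComputablePred (· ∈ S))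
    (hinf : S.Infinite) : ∃ g : ℕ → ℕ, Computable g ∧ ∀ a, a < g a ∧ g a ∈ S := by
  obtain ⟨f, hf, hfS⟩ := ComputablePred.computable_iff.1 hS
  have hmem : ∀ n, n ∈ S ↔ f n := fun n => Iff.of_eq (congrFun hfS n)
  let q : ℕ → ℕ → Bool := fun a n => decide (a < n) && f n
  have hq : Computable₂ q :=
    Primrec.and.to_comp.comp (Primrec.nat_lt.decide.to_comp) (hf.comp Computable.snd)
  have hex : ∀ a, ∃ n, q a n := fun a => by
    obtain ⟨b, hbS, hab⟩ := hinf.exists_gt a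
    exact ⟨b, by simp [q, hab, (hmem b).1 hbS]⟩
  refine ⟨fun a => Nat.find (hex a), Computable.nat_find hq hex, fun a => ?_⟩
  obtain ⟨hlt, hfind⟩ := Bool.and_eq_true_iff.1 (Nat.find_spec (hex a))
  exact ⟨of_decide_eq_true hlt, (hmem _).2 hfind⟩

namespace MRigid

variable {A : Set ℕ}

theorem compl (hA : MRigid A) : MRigid Aᶜ :=
  fun k hk hkA => hA k hk fun x => not_iff_not.1 (hkA x)

theorem finite_of_subset (hA : MRigid A) {S : Set ℕ} (hS : ComputablePred (· ∈ S))
    (hSA : S ⊆ A) : S.Finite := by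
  by_contra hinf
  obtain ⟨g, hg, hgS⟩ := hS.exists_computable_lt_mem hinf
  obtain ⟨_, hdec⟩ := hS
  let k : ℕ → ℕ := fun x => bif decide (x ∈ S) then g x else x
  have hauto : ∀ x, x ∈ A ↔ k x ∈ A := fun x => by
    by_cases hx : x ∈ S
    · simpa [k, hx] using iff_of_true (hSA hx) (hSA (hgS x).2)
    · simp [k, hx]
  have hmoved : S ⊆ {x | k x ≠ x} := fun x hx => by
    simpa [k, hx] using (hgS x).1.ne'
  exact hinf ((hA k (hdec.cond hg .id) hauto).subset hmoved)

end MRigid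

/-- Every m-rigid set is bi-immune: neither `A` nor its complement has an
infinite computable subset. -/
theorem stmt_1 (A : Set ℕ) (hA : MRigid A) :
    (¬ ∃ S : Set ℕ, ComputablePred (· ∈ S) ∧ S.Infinite ∧ S ⊆ A) ∧
    (¬ ∃ S : Set ℕ, ComputablePred (· ∈ S) ∧ S.Infinite ∧ S ⊆ Aᶜ) :=
  ⟨fun ⟨_, hS, hinf, hSA⟩ => hinf (hA.finite_of_subset hS hSA),
    fun ⟨_, hS, hinf, hSA⟩ => hinf (hA.compl.finite_of_subset hS hSA)⟩
end

section
/- No computably enumerable subset of ω is m-rigid. -/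
open Nat.Partrec.Code

theorem mRigid_compl_iff {A : Set ℕ} : MRigid Aᶜ ↔ MRigid A := by
  simp only [MRigid, Set.mem_compl_iff, not_iff_not]

theorem not_mRigid_of_infinite_subset {A R : Set ℕ} (hR : ComputablePred (· ∈ R))
    (hRinf : R.Infinite) (hRA : R ⊆ A) : ¬ MRigid A := by
  classical
  obtain ⟨b, hb⟩ := hRinf.nonempty
  let k : ℕ → ℕ := fun x => if x ∈ R then b else x
  have hk : Computable k := ComputablePred.ite (Computable.const b) Computable.id hR
  have hkA : ∀ x, x ∈ A ↔ k x ∈ A := fun x => by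
    by_cases hx : x ∈ R
    · simp only [k, if_pos hx, iff_true_intro (hRA hx), iff_true_intro (hRA hb)]
    · simp only [k, if_neg hx]
  have hmoved : R \ {b} ⊆ {x | k x ≠ x} := fun x ⟨hxR, hxb⟩ => by
    simpa [k, hxR, eq_comm] using hxb
  exact fun hA => (hRinf.sdiff (Set.finite_singleton b)) ((hA k hk hkA).subset hmoved)

theorem REPred.exists_primrec₂_iff_exists {p : ℕ → Prop} (hp : REPred p) :
    ∃ q : ℕ → ℕ → Bool, Primrec₂ q ∧ ∀ x, p x ↔ ∃ s, q x s = true := by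
  have hpart : Partrec fun x => (Part.assert (p x) fun _ => Part.some ()).map fun _ => (0 : ℕ) :=
    hp.map ((Computable.const 0).comp Computable.fst).to₂
  obtain ⟨c, hc⟩ := exists_code.1 (Partrec.nat_iff.1 hpart)
  refine ⟨fun x s => (evaln s c x).isSome,
    Primrec.option_isSome.comp (primrec_evaln.comp
      ((Primrec.snd.pair (Primrec.const c)).pair Primrec.fst)), fun x => ?_⟩
  have hdom : p x ↔ (eval c x).Dom := by simp [hc, Part.assert]
  simp only [hdom, Part.dom_iff_mem, evaln_complete, Option.isSome_iff_exists]
  exact ⟨fun ⟨y, s, hs⟩ => ⟨s, y, hs⟩, fun ⟨s, y, hs⟩ => ⟨y, s, hs⟩⟩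

theorem REPred.exists_computable_range_eq {A : Set ℕ} (hA : REPred (· ∈ A))
    (hne : A.Nonempty) : ∃ f : ℕ → ℕ, Computable f ∧ Set.range f = A := by
  obtain ⟨q, hq, hqA⟩ := hA.exists_primrec₂_iff_exists
  obtain ⟨a, ha⟩ := hne
  -- `n = ⟪x, s⟫` enumerates `x` if `q` confirms `x ∈ A` at stage `s`, and `a` otherwise
  refine ⟨fun n => bif q n.unpair.1 n.unpair.2 then n.unpair.1 else a, ?_, ?_⟩
  · have h₁ : Primrec fun n : ℕ => n.unpair.1 := Primrec.fst.comp Primrec.unpair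
    have h₂ : Primrec fun n : ℕ => n.unpair.2 := Primrec.snd.comp Primrec.unpair
    exact (Primrec.cond (hq.comp h₁ h₂) h₁ (Primrec.const a)).to_comp
  · refine Set.Subset.antisymm ?_ fun x hx => ?_
    · rintro _ ⟨n, rfl⟩
      cases hs : q n.unpair.1 n.unpair.2
      · simpa [hs] using ha
      · simpa [hs] using (hqA _).2 ⟨_, hs⟩
    · obtain ⟨s, hs⟩ := (hqA x).1 hx
      exact ⟨Nat.pair x s, by simp [hs]⟩

theorem exists_infinite_computablePred_subset_range {f : ℕ → ℕ} (hf : Computable f)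
    (hinf : (Set.range f).Infinite) :
    ∃ R ⊆ Set.range f, R.Infinite ∧ ComputablePred (· ∈ R) := by
  have hunb : ∀ x, ∃ n, x ≤ f n := fun x => by
    obtain ⟨_, ⟨n, rfl⟩, hn⟩ := hinf.exists_gt x
    exact ⟨n, hn.le⟩
  -- `F x` is the first stage at which `f` reaches `x`; `R` is the set of record values of `f`
  let F : ℕ → ℕ := fun x => Nat.find (hunb x)
  have hF : Computable F := Computable.find (P := fun x n => x ≤ f n)
    (Computable.computablePred (Primrec.nat_le.decide.to_comp.comp Computable.fst
      (hf.comp Computable.snd))) hunb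
  have hF_mono : ∀ {x y}, x ≤ y → F x ≤ F y := fun hxy =>
    Nat.find_mono fun _ hy => hxy.trans hy
  have hF_le : ∀ {x n}, x ≤ f n → F x ≤ n := fun hx => Nat.find_min' _ hx
  have hle_F : ∀ x, x ≤ f (F x) := fun x => Nat.find_spec (hunb x)
  refine ⟨{x | f (F x) = x}, fun x hx => ⟨F x, hx⟩, ?_, ?_⟩
  · refine Set.infinite_of_forall_exists_gt fun N => ⟨f (F (N + 1)), ?_, hle_F (N + 1)⟩
    -- the first value of `f` that exceeds `N` is a record
    have : F (f (F (N + 1))) = F (N + 1) := le_antisymm (hF_le le_rfl) (hF_mono (hle_F _))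
    exact congrArg f this
  · exact Computable.computablePred
      (Primrec.eq.decide.to_comp.comp (hf.comp hF) Computable.id)

theorem REPred.exists_infinite_computablePred_subset {A : Set ℕ} (hA : REPred (· ∈ A))
    (hinf : A.Infinite) : ∃ R ⊆ A, R.Infinite ∧ ComputablePred (· ∈ R) := by
  obtain ⟨f, hf, rfl⟩ := hA.exists_computable_range_eq hinf.nonempty
  exact exists_infinite_computablePred_subset_range hf hinf

/-- No computably enumerable set is m-rigid. -/
theorem stmt_4 (A : Set ℕ) (hA : REPred (· ∈ A)) : ¬ MRigid A := by
  rcases A.finite_or_infinite with hfin | hinf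
  · obtain ⟨N, hN⟩ := hfin.bddAbove
    rw [← mRigid_compl_iff]
    refine not_mRigid_of_infinite_subset (R := Set.Ioi N) ?_ (Set.Ioi_infinite N)
      fun x hx hxA => (hN hxA).not_gt hx
    exact Computable.computablePred
      (Primrec.nat_lt.decide.to_comp.comp (Computable.const N) Computable.id)
  · obtain ⟨R, hRA, hRinf, hR⟩ := hA.exists_infinite_computablePred_subset hinf
    exact not_mRigid_of_infinite_subset hR hRinf hRA
end

section
/- Let A ⊆ ω be m-rigid and let c ∈ ω with c ∉ A. For a computable set S ⊆ ω define f_S : ω → ω by f_S(2x) = x, f_S(2x+1) = x if x ∈ S, f_S(2x+1) = c if x ∉ S, and set B_S := f_S⁻¹(A). Then for all computable sets S, T ⊆ ω: if B_S ≤_1 B_T, then S ⊆* T (i.e. S \ T is finite). -/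
open Classical in
/-- The duplication function: `f_S (2x) = x`, `f_S (2x+1) = x` if `x ∈ S`,
and `f_S (2x+1) = c` if `x ∉ S`. -/
noncomputable def dupFun (S : Set ℕ) (c : ℕ) (z : ℕ) : ℕ :=
  if z % 2 = 0 then z / 2
  else if z / 2 ∈ S then z / 2 else c

lemma dupFun_two_mul (S : Set ℕ) (c n : ℕ) : dupFun S c (2 * n) = n := by
  simp [dupFun]

lemma dupFun_two_mul_add_one_of_mem {S : Set ℕ} {n : ℕ} (c : ℕ) (hn : n ∈ S) :
    dupFun S c (2 * n + 1) = n := by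
  simp [dupFun, Nat.mul_add_div, hn]

lemma eq_two_mul_of_dupFun_eq {T : Set ℕ} {c n z : ℕ} (hnT : n ∉ T) (hnc : n ≠ c)
    (h : dupFun T c z = n) : z = 2 * n := by
  unfold dupFun at h
  split_ifs at h with hz hzT
  · omega
  · exact absurd (h ▸ hzT) hnT
  · exact absurd h.symm hnc

lemma computable_dupFun {S : Set ℕ} (hS : ComputablePred (· ∈ S)) (c : ℕ) :
    Computable (dupFun S c) := by
  classical
  have hhalf : Computable (· / 2 : ℕ → ℕ) := (Primrec.nat_div.comp .id (.const 2)).to_comp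
  refine ComputablePred.ite hhalf (ComputablePred.ite hhalf (.const c) ?_) ?_
  · exact Computable.computablePred (hS.decide.comp hhalf)
  · exact PrimrecPred.computablePred
      (Primrec.eq.comp (Primrec.nat_mod.comp .id (.const 2)) (.const 0))

lemma MRigid.finite_setOf_mem_and_ne {A P : Set ℕ} (hA : MRigid A)
    (hP : ComputablePred (· ∈ P)) {k : ℕ → ℕ} (hk : Computable k)
    (hauto : ∀ x ∈ P, x ∈ A ↔ k x ∈ A) :
    {x | x ∈ P ∧ k x ≠ x}.Finite := by
  classical
  refine (hA _ (ComputablePred.ite hk .id hP) fun x => ?_).subset fun x ⟨hxP, hx⟩ => ?_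
  · by_cases hxP : x ∈ P <;> simp [hxP, hauto]
  · simpa [hxP] using hx

theorem stmt_7_general (A : Set ℕ) (hA : MRigid A) (c : ℕ)
    (S T : Set ℕ) (hS : ComputablePred (· ∈ S)) (hT : ComputablePred (· ∈ T))
    (hred : OneOneReducible (· ∈ dupFun S c ⁻¹' A) (· ∈ dupFun T c ⁻¹' A)) :
    (S \ T).Finite := by
  obtain ⟨g, hg, hinj, hgred⟩ := hred
  have hfT := computable_dupFun hT c
  have h_even : {n | dupFun T c (g (2 * n)) ≠ n}.Finite :=
    hA _ (hfT.comp (hg.comp Primrec.nat_double.to_comp)) fun n => by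
      simpa [dupFun_two_mul] using hgred (2 * n)
  have h_odd : {n | n ∈ S ∧ dupFun T c (g (2 * n + 1)) ≠ n}.Finite :=
    hA.finite_setOf_mem_and_ne hS (hfT.comp (hg.comp Primrec.nat_double_succ.to_comp))
      fun n hn => by simpa [dupFun_two_mul_add_one_of_mem c hn] using hgred (2 * n + 1)
  refine ((h_even.union h_odd).union (Set.finite_singleton c)).subset fun n ⟨hnS, hnT⟩ => ?_
  by_contra hn
  simp only [Set.mem_union, Set.mem_ofPred_eq, Set.mem_singleton_iff, not_or, not_and, not_not]
    at hn
  obtain ⟨⟨h0, h1⟩, hnc⟩ := hn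
  have := hinj ((eq_two_mul_of_dupFun_eq hnT hnc h0).trans
    (eq_two_mul_of_dupFun_eq hnT hnc (h1 hnS)).symm)
  omega

/-- Key claim: if `A` is m-rigid and `B_S := f_S⁻¹(A)`, `B_T := f_T⁻¹(A)` with
computable `S, T`, then `B_S ≤₁ B_T` forces `S ⊆* T`. -/
theorem stmt_7 (A : Set ℕ) (hA : MRigid A) (c : ℕ) (hc : c ∉ A)
    (S T : Set ℕ) (hS : ComputablePred (· ∈ S)) (hT : ComputablePred (· ∈ T))
    (hred : OneOneReducible (· ∈ dupFun S c ⁻¹' A) (· ∈ dupFun T c ⁻¹' A)) :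
    (S \ T).Finite :=
  stmt_7_general A hA c S T hS hT hred
end

section
/- Let k : ω → ω be a total computable function such that the set E := {x : k(x) ≠ x} is infinite. Then there is a computable strictly increasing sequence (x_n)_{n∈ω} of elements of E with x_n > max{x_i, k(x_i) : i < n} for all n, and the sets U_n := {A ∈ 2^ω : ∀ i < n, A(x_i) = A(k(x_i))} form a uniformly computable sequence of clopen subsets of Cantor space with μ(U_n) = 2^{-n} for all n and Fix(k) ⊆ ⋂_n U_n, where Fix(k) := {A ∈ 2^ω : ∀x, A(x) = A(k(x))}. In particular, (U_n) is a Martin-Löf test covering Fix(k). -/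
open MeasureTheory

/-- The cylinder of binary sequences extending the finite string `σ`. -/
def cylinder (σ : List Bool) : Set (ℕ → Bool) :=
  {X | ∀ i, i < σ.length → X i = σ.getD i false}

/-- `μ` is the fair-coin product measure on Cantor space:
each cylinder `[σ]` has measure `2^{-|σ|}`. -/
def IsFairCoin (μ : Measure (ℕ → Bool)) : Prop :=
  ∀ σ : List Bool, μ (cylinder σ) = (1 / 2 : ENNReal) ^ σ.length

/-- `(U n)` is a Martin-Löf test w.r.t. `μ`: a uniformly c.e. sequence of open
sets (each `U n` is the union of the cylinders over a uniformly c.e. set of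
strings) with `μ (U n) ≤ 2^{-n}`. -/
def MLTest (μ : Measure (ℕ → Bool)) (U : ℕ → Set (ℕ → Bool)) : Prop :=
  (∃ W : ℕ → List Bool → Prop,
      REPred (fun p : ℕ × List Bool => W p.1 p.2) ∧
      ∀ n, U n = ⋃ σ ∈ {σ | W n σ}, cylinder σ) ∧
  ∀ n, μ (U n) ≤ (1 / 2 : ENNReal) ^ n

/-!
The points `x n` are found by unbounded search: `x (n + 1)` is the least element of
`E = {x | k x ≠ x}` above `max (x n) (k (x n))`. Then for `i < n` both `x i` and `k (x i)` lie
below `x n`, so `U n` only depends on the first `x n` bits. For such a set `U` and `q < p`,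
a string of length `p + 1` in `U ∩ {A | A p = A q}` is determined by its first `p` bits, so
this intersection has half the measure of `U`; by induction `μ (U n) = 2⁻ⁿ`. For the test,
`U n` is the union of the cylinders of the strings of length `x n` satisfying the first `n`
constraints, a decidable property of `n` and the string.
-/

def firstBits (L : ℕ) (A : ℕ → Bool) : Fin L → Bool := fun i => A i

lemma measurable_firstBits (L : ℕ) : Measurable (firstBits L) :=
  measurable_pi_lambda _ fun i => measurable_pi_apply (i : ℕ)

lemma firstBits_succ (L : ℕ) (A : ℕ → Bool) :
    firstBits (L + 1) A = Fin.snoc (firstBits L A) (A L) := by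
  funext i
  refine Fin.lastCases ?_ (fun j => ?_) i <;> simp [firstBits]

lemma preimage_firstBits_singleton {L : ℕ} (v : Fin L → Bool) :
    firstBits L ⁻¹' {v} = _root_.cylinder (List.ofFn v) := by
  ext A
  simp only [Set.mem_preimage, Set.mem_singleton_iff, _root_.cylinder, Set.mem_ofPred_eq,
    List.length_ofFn]
  constructor
  · rintro rfl i hi
    simp [firstBits, hi]
  · intro h
    funext i
    simpa [firstBits] using h i i.isLt

section DependsOn

variable {L : ℕ} {U : Set (ℕ → Bool)}

lemma preimage_image_firstBits_of_dependsOn (hU : DependsOn (· ∈ U) (Set.Iio L)) :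
    firstBits L ⁻¹' (firstBits L '' U) = U := by
  refine subset_antisymm ?_ (Set.subset_preimage_image _ _)
  rintro B ⟨A, hA, hAB⟩
  exact (hU fun i hi => congrFun hAB ⟨i, hi⟩).mp hA

lemma eq_biUnion_cylinder_of_dependsOn (hU : DependsOn (· ∈ U) (Set.Iio L)) :
    U = ⋃ σ ∈ {σ : List Bool | σ.length = L ∧ (fun i => σ.getD i false) ∈ U},
      _root_.cylinder σ := by
  ext A
  simp only [Set.mem_iUnion, Set.mem_ofPred_eq, exists_prop]
  constructor
  · intro hA
    have hagree : ∀ i < L, A i = (List.ofFn (firstBits L A)).getD i false := fun i hi => by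
      simp [firstBits, hi]
    exact ⟨_, ⟨List.length_ofFn, (hU hagree).mp hA⟩, fun i hi => hagree i (by simpa using hi)⟩
  · rintro ⟨σ, ⟨rfl, hσ⟩, hA⟩
    exact (hU fun i hi => (hA i hi).symm).mp hσ

end DependsOn

namespace IsFairCoin

variable {μ : Measure (ℕ → Bool)}

lemma measure_univ (hμ : IsFairCoin μ) : μ Set.univ = 1 := by
  have hnil : _root_.cylinder [] = Set.univ :=
    Set.eq_univ_of_forall fun _ _ hi => absurd hi (by simp)
  simpa [hnil] using hμ []

lemma map_firstBits (hμ : IsFairCoin μ) (L : ℕ) :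
    μ.map (firstBits L) = (1 / 2 : ENNReal) ^ L • Measure.count := by
  refine Measure.ext_of_singleton fun v => ?_
  rw [Measure.map_apply (measurable_firstBits L) (measurableSet_singleton v),
    preimage_firstBits_singleton, hμ, List.length_ofFn, Measure.smul_apply,
    Measure.count_singleton, smul_eq_mul, mul_one]

lemma measure_preimage_firstBits (hμ : IsFairCoin μ) {L : ℕ} (S : Set (Fin L → Bool)) :
    μ (firstBits L ⁻¹' S) = (1 / 2 : ENNReal) ^ L * Measure.count S := by
  rw [← Measure.map_apply (measurable_firstBits L) (Set.toFinite S).measurableSet,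
    hμ.map_firstBits, Measure.smul_apply, smul_eq_mul]

lemma measure_inter_eq_half (hμ : IsFairCoin μ) {p q : ℕ} {U : Set (ℕ → Bool)}
    (hU : DependsOn (· ∈ U) (Set.Iio p)) (hqp : q < p) :
    μ (U ∩ {A | A p = A q}) = μ U / 2 := by
  let extend : (Fin p → Bool) → (Fin (p + 1) → Bool) := fun v => Fin.snoc v (v ⟨q, hqp⟩)
  have hextend : Function.Injective extend := fun v w h => (Fin.snoc_inj.mp h).1
  have hset : U ∩ {A | A p = A q} = firstBits (p + 1) ⁻¹' (extend '' (firstBits p '' U)) := by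
    conv_lhs => rw [← preimage_image_firstBits_of_dependsOn hU]
    ext A
    simp only [Set.mem_inter_iff, Set.mem_preimage, Set.mem_ofPred_eq, Set.mem_image,
      firstBits_succ, extend, Fin.snoc_inj]
    constructor
    · rintro ⟨hA, hpq⟩
      exact ⟨_, hA, rfl, by simp [firstBits, hpq]⟩
    · rintro ⟨v, hv, rfl, hvq⟩
      exact ⟨hv, by simpa [firstBits] using hvq.symm⟩
  rw [hset, hμ.measure_preimage_firstBits, Measure.count_injective_image hextend]
  conv_rhs => rw [← preimage_image_firstBits_of_dependsOn hU, hμ.measure_preimage_firstBits]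
  simp only [one_div, ENNReal.div_eq_inv_mul]
  ring

end IsFairCoin

def agreeSet (a b : ℕ → ℕ) (n : ℕ) : Set (ℕ → Bool) :=
  {A | ∀ i < n, A (a i) = A (b i)}

section agreeSet

variable {a b : ℕ → ℕ}

lemma agreeSet_zero : agreeSet a b 0 = Set.univ := by
  simp [agreeSet]

lemma agreeSet_succ (n : ℕ) :
    agreeSet a b (n + 1) = agreeSet a b n ∩ {A | A (a n) = A (b n)} := by
  ext A
  simp only [agreeSet, Set.mem_inter_iff, Set.mem_ofPred_eq, Nat.forall_lt_succ_right]

lemma isClopen_agreeSet (n : ℕ) : IsClopen (agreeSet a b n) := by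
  induction n with
  | zero => rw [agreeSet_zero]; exact isClopen_univ
  | succ n ih =>
    rw [agreeSet_succ]
    have hpair : Continuous fun A : ℕ → Bool => (A (a n), A (b n)) := by fun_prop
    exact ih.inter ((isClopen_discrete {p : Bool × Bool | p.1 = p.2}).preimage hpair)

lemma dependsOn_agreeSet {L n : ℕ} (hL : ∀ i < n, a i < L ∧ b i < L) :
    DependsOn (· ∈ agreeSet a b n) (Set.Iio L) := fun A B hAB => by
  simp only [agreeSet, Set.mem_ofPred_eq, eq_iff_iff]
  exact forall₂_congr fun i hi => by rw [hAB _ (hL i hi).1, hAB _ (hL i hi).2]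

lemma IsFairCoin.measure_agreeSet {μ : Measure (ℕ → Bool)} (hμ : IsFairCoin μ)
    (hab : ∀ n, b n ≠ a n) (hsep : ∀ n i, i < n → a i < a n ∧ b i < a n) (n : ℕ) :
    μ (agreeSet a b n) = (1 / 2 : ENNReal) ^ n := by
  induction n with
  | zero => rw [agreeSet_zero, hμ.measure_univ, pow_zero]
  | succ n ih =>
    have hdep : DependsOn (· ∈ agreeSet a b n) (Set.Iio (a n)) := dependsOn_agreeSet (hsep n)
    rw [agreeSet_succ, pow_succ, ← ih, mul_one_div]
    rcases (hab n).lt_or_gt with hlt | hgt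
    · exact hμ.measure_inter_eq_half hdep hlt
    · rw [show {A : ℕ → Bool | A (a n) = A (b n)} = {A | A (b n) = A (a n)} from
        Set.ext fun _ => eq_comm]
      exact hμ.measure_inter_eq_half (hdep.mono (Set.Iio_subset_Iio hgt.le)) hgt

end agreeSet

lemma PrimrecPred.computablePred_comp {α β : Type*} [Primcodable α] [Primcodable β]
    {p : β → Prop} (hp : PrimrecPred p) {f : α → β} (hf : Computable f) :
    ComputablePred fun a => p (f a) := by
  obtain ⟨_, hp⟩ := hp
  exact Computable.computablePred (hp.to_comp.comp hf)

lemma Computable.list_range_map {σ : Type*} [Primcodable σ] {f : ℕ → σ} (hf : Computable f) :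
    Computable fun n => (List.range n).map f := by
  have hstep : Computable₂ fun (_ : ℕ) (p : ℕ × List σ) => p.2 ++ [f p.1] :=
    (Computable.list_concat.comp (Computable.snd.comp Computable.snd)
      (hf.comp (Computable.fst.comp Computable.snd))).to₂
  refine (Computable.nat_rec Computable.id (Computable.const []) hstep).of_eq fun n => ?_
  induction n with
  | zero => rfl
  | succ n ih => simp [List.range_succ, ← ih]

lemma rePred_agreeSet_prefixes {a b : ℕ → ℕ} (ha : Computable a) (hb : Computable b) :
    REPred fun p : ℕ × List Bool =>
      p.2.length = a p.1 ∧ (fun i => p.2.getD i false) ∈ agreeSet a b p.1 := by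
  have hpairs : Computable fun n => (List.range n).map fun i => (a i, b i) :=
    Computable.list_range_map (ha.pair hb)
  have hagree : PrimrecRel fun (j : ℕ × ℕ) (σ : List Bool) =>
      σ.getD j.1 false = σ.getD j.2 false :=
    Primrec.eq.comp ((Primrec.list_getD false).comp Primrec.snd (Primrec.fst.comp Primrec.fst))
      ((Primrec.list_getD false).comp Primrec.snd (Primrec.snd.comp Primrec.fst))
  have hP : PrimrecPred fun t : List Bool × ℕ × List (ℕ × ℕ) =>
      t.1.length = t.2.1 ∧ ∀ j ∈ t.2.2, t.1.getD j.1 false = t.1.getD j.2 false :=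
    (Primrec.eq.comp (Primrec.list_length.comp Primrec.fst) (Primrec.fst.comp Primrec.snd)).and
      (hagree.forall_mem_list.comp (Primrec.snd.comp Primrec.snd) Primrec.fst)
  refine ComputablePred.to_re ((hP.computablePred_comp (Computable.snd.pair
    ((ha.comp Computable.fst).pair (hpairs.comp Computable.fst)))).of_eq fun p => ?_)
  simp [agreeSet]

def nextMoved (k : ℕ → ℕ) (hE : {x | k x ≠ x}.Infinite) (y : ℕ) : ℕ :=
  Nat.find (hE.exists_gt y)

section moved

variable {k : ℕ → ℕ} (hE : {x | k x ≠ x}.Infinite)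

lemma nextMoved_spec (y : ℕ) :
    k (nextMoved k hE y) ≠ nextMoved k hE y ∧ y < nextMoved k hE y :=
  Nat.find_spec (hE.exists_gt y)

lemma computable_nextMoved (hk : Computable k) : Computable (nextMoved k hE) := by
  have hP : PrimrecPred fun t : ℕ × ℕ × ℕ => t.2.2 ≠ t.2.1 ∧ t.1 < t.2.1 :=
    (Primrec.eq.comp (Primrec.snd.comp Primrec.snd) (Primrec.fst.comp Primrec.snd)).not.and
      (Primrec.nat_lt.comp Primrec.fst (Primrec.fst.comp Primrec.snd))
  exact Computable.find (hP.computablePred_comp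
    (Computable.fst.pair (Computable.snd.pair (hk.comp Computable.snd)))) _

def movedSeq : ℕ → ℕ
  | 0 => nextMoved k hE 0
  | n + 1 => nextMoved k hE (max (movedSeq n) (k (movedSeq n)))

lemma movedSeq_moved (n : ℕ) : k (movedSeq hE n) ≠ movedSeq hE n := by
  cases n <;> exact (nextMoved_spec hE _).1

lemma max_lt_movedSeq_succ (n : ℕ) :
    max (movedSeq hE n) (k (movedSeq hE n)) < movedSeq hE (n + 1) :=
  (nextMoved_spec hE _).2

lemma strictMono_movedSeq : StrictMono (movedSeq hE) :=
  strictMono_nat_of_lt_succ fun n => (max_lt_iff.mp (max_lt_movedSeq_succ hE n)).1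

lemma movedSeq_sep {n i : ℕ} (hi : i < n) :
    movedSeq hE i < movedSeq hE n ∧ k (movedSeq hE i) < movedSeq hE n :=
  ⟨strictMono_movedSeq hE hi, (max_lt_iff.mp (max_lt_movedSeq_succ hE i)).2.trans_le
    ((strictMono_movedSeq hE).monotone hi)⟩

lemma computable_movedSeq (hk : Computable k) : Computable (movedSeq hE) := by
  have hstep : Computable₂ fun (_ : ℕ) (p : ℕ × ℕ) => nextMoved k hE (max p.2 (k p.2)) :=
    ((computable_nextMoved hE hk).comp (Primrec.nat_max.to_comp.comp
      (Computable.snd.comp Computable.snd) (hk.comp (Computable.snd.comp Computable.snd)))).to₂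
  refine (Computable.nat_rec Computable.id (Computable.const (nextMoved k hE 0)) hstep).of_eq
    fun n => ?_
  induction n with
  | zero => rfl
  | succ n ih => simp [movedSeq, ← ih]

end moved

/-- For a total computable `k` with `E := {x | k x ≠ x}` infinite, there is a
computable strictly increasing sequence `(x_n)` in `E` with
`x_n > max {x_i, k x_i : i < n}`, such that the clopen sets
`U_n := {A | ∀ i < n, A (x_i) = A (k (x_i))}` satisfy `μ (U_n) = 2^{-n}` and
`Fix(k) ⊆ ⋂ₙ U_n`; in particular `(U_n)` is a Martin-Löf test covering
`Fix(k)`. -/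
theorem stmt_11 (k : ℕ → ℕ) (hk : Computable k)
    (hE : {x | k x ≠ x}.Infinite)
    (μ : Measure (ℕ → Bool)) (hμ : IsFairCoin μ) :
    ∃ x : ℕ → ℕ, Computable x ∧ StrictMono x ∧
      (∀ n, k (x n) ≠ x n) ∧
      (∀ n i, i < n → x i < x n ∧ k (x i) < x n) ∧
      (∀ n, IsClopen {A : ℕ → Bool | ∀ i < n, A (x i) = A (k (x i))}) ∧
      (∀ n, μ {A : ℕ → Bool | ∀ i < n, A (x i) = A (k (x i))}
          = (1 / 2 : ENNReal) ^ n) ∧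
      ({A : ℕ → Bool | ∀ y, A y = A (k y)}
          ⊆ ⋂ n, {A : ℕ → Bool | ∀ i < n, A (x i) = A (k (x i))}) ∧
      MLTest μ (fun n => {A : ℕ → Bool | ∀ i < n, A (x i) = A (k (x i))}) := by
  set x := movedSeq hE
  have hx : Computable x := computable_movedSeq hE hk
  have hsep : ∀ n i, i < n → x i < x n ∧ k (x i) < x n := fun _ _ => movedSeq_sep hE
  have hmeasure : ∀ n, μ (agreeSet x (k ∘ x) n) = (1 / 2 : ENNReal) ^ n :=
    hμ.measure_agreeSet (movedSeq_moved hE) hsep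
  refine ⟨x, hx, strictMono_movedSeq hE, movedSeq_moved hE, hsep, isClopen_agreeSet, hmeasure,
    fun A hA => Set.mem_iInter.mpr fun n i _ => hA (x i), ?_⟩
  exact ⟨⟨_, rePred_agreeSet_prefixes hx (hk.comp hx),
    fun n => eq_biUnion_cylinder_of_dependsOn (dependsOn_agreeSet (hsep n))⟩, fun n => (hmeasure n).le⟩
end

section
/- Let k : ω → ω be a total computable function that is not eventually the identity (i.e. k(x) ≠ x for infinitely many x). Then the set Fix(k) := {A ∈ 2^ω : ∀x, A(x) = A(k(x))} has fair-coin measure zero: μ(Fix(k)) = 0. -/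
open MeasureTheory

/-- Extend a finite bit vector by `false`. -/
def extFn {L : ℕ} (v : Fin L → Bool) : ℕ → Bool :=
  fun j => if h : j < L then v ⟨j, h⟩ else false

lemma mem_cylinder_ofFn {L : ℕ} (v : Fin L → Bool) (A : ℕ → Bool) :
    A ∈ _root_.cylinder (List.ofFn v) ↔ ∀ j, j < L → A j = extFn v j := by
  constructor
  · intro h j hj
    have h' := h j (by simpa using hj)
    rw [h']
    rw [List.getD_eq_getElem _ _ (by simpa using hj)]
    simp [extFn, hj]
  · intro h j hj
    have hj' : j < L := by simpa using hj
    rw [List.getD_eq_getElem _ _ (by simpa using hj')]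
    rw [h j hj']
    simp [extFn, hj']

lemma cylinder_measurable (σ : List Bool) : MeasurableSet (_root_.cylinder σ) := by
  have : _root_.cylinder σ = ⋂ i ∈ Finset.range σ.length,
      (fun X : ℕ → Bool => X i) ⁻¹' {σ.getD i false} := by
    ext X; simp [_root_.cylinder]
  rw [this]
  exact Finset.measurableSet_biInter _ fun i _ =>
    (measurable_pi_apply i) (measurableSet_singleton _)

lemma cylinder_disjoint {L : ℕ} (v w : Fin L → Bool) (h : v ≠ w) :
    Disjoint (_root_.cylinder (List.ofFn v)) (_root_.cylinder (List.ofFn w)) := by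
  rw [Set.disjoint_left]
  intro A hA hB
  apply h
  funext j
  have h1 := (mem_cylinder_ofFn v A).1 hA j j.2
  have h2 := (mem_cylinder_ofFn w A).1 hB j j.2
  have e1 : extFn v j.1 = v j := by simp [extFn, j.2]
  have e2 : extFn w j.1 = w j := by simp [extFn, j.2]
  rw [e1] at h1; rw [e2] at h2
  rw [← h1, ← h2]

lemma measure_setOf_eq {L : ℕ} (μ : Measure (ℕ → Bool)) (hμ : IsFairCoin μ)
    (Q : (ℕ → Bool) → Prop) [DecidablePred Q]
    (hQ : ∀ A B : ℕ → Bool, (∀ j, j < L → A j = B j) → Q A → Q B) :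
    μ {A | Q A} =
      ((Finset.univ.filter (fun v : Fin L → Bool => Q (extFn v))).card : ENNReal)
        * (1 / 2 : ENNReal) ^ L := by
  set S := Finset.univ.filter (fun v : Fin L → Bool => Q (extFn v)) with hS
  have hdecomp : {A | Q A} = ⋃ v ∈ S, _root_.cylinder (List.ofFn v) := by
    ext A
    simp only [Set.mem_setOf_eq, Set.mem_iUnion, exists_prop]
    constructor
    · intro hA
      refine ⟨fun i : Fin L => A i, ?_, ?_⟩
      · rw [hS, Finset.mem_filter]
        refine ⟨Finset.mem_univ _, hQ A _ (fun j hj => by simp [extFn, hj]) hA⟩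
      · exact (mem_cylinder_ofFn _ _).2 fun j hj => by simp [extFn, hj]
    · rintro ⟨v, hvS, hvc⟩
      rw [hS, Finset.mem_filter] at hvS
      exact hQ (extFn v) A (fun j hj => ((mem_cylinder_ofFn v A).1 hvc j hj).symm) hvS.2
  rw [hdecomp, measure_biUnion_finset ?_ (fun v _ => cylinder_measurable _)]
  · have : ∀ v ∈ S, μ (_root_.cylinder (List.ofFn v)) = (1 / 2 : ENNReal) ^ L := by
      intro v _
      rw [hμ (List.ofFn v)]
      simp
    rw [Finset.sum_congr rfl this, Finset.sum_const, nsmul_eq_mul]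
  · intro v hv w hw hvw
    exact cylinder_disjoint v w hvw

/-- If `k` is total computable and not eventually the identity, then
`Fix(k) := {A | ∀ x, A x = A (k x)}` has fair-coin measure zero. -/
theorem stmt_12 (k : ℕ → ℕ) (hk : Computable k)
    (hE : {x | k x ≠ x}.Infinite)
    (μ : Measure (ℕ → Bool)) (hμ : IsFairCoin μ) :
    μ {A : ℕ → Bool | ∀ x, A x = A (k x)} = 0 := by
  classical
  have exg : ∀ bd : ℕ, ∃ c, (k c ≠ c) ∧ bd < c := by
    intro bd
    obtain ⟨c, hc, hbc⟩ := hE.exists_gt bd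
    exact ⟨c, hc, hbc⟩
  -- build the sequence
  let seq : ℕ → ℕ × ℕ := fun n => Nat.rec
    ((exg 0).choose, max (exg 0).choose (k (exg 0).choose))
    (fun _ p => ((exg p.2).choose, max p.2 (max (exg p.2).choose (k (exg p.2).choose)))) n
  let y : ℕ → ℕ := fun n => (seq n).1
  let b : ℕ → ℕ := fun n => (seq n).2
  have h1 : ∀ n, k (y n) ≠ y n := by
    intro n
    cases n with
    | zero => exact (exg 0).choose_spec.1
    | succ m => exact (exg (seq m).2).choose_spec.1
  have h2 : ∀ n, max (y n) (k (y n)) ≤ b n := by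
    intro n
    cases n with
    | zero => exact le_refl _
    | succ m => exact le_max_right _ _
  have h3 : ∀ n, b n < y (n + 1) := fun n => (exg (seq n).2).choose_spec.2
  have h4 : ∀ n, b n ≤ b (n + 1) := fun n => le_max_left _ _
  have h5 : ∀ i j, i ≤ j → b i ≤ b j := by
    intro i j hij
    induction j with
    | zero => simp_all
    | succ m ih =>
      rcases Nat.lt_or_ge i (m + 1) with h | h
      · exact le_trans (ih (Nat.lt_succ_iff.1 h)) (h4 m)
      · have : i = m + 1 := le_antisymm hij h
        simp [this]
  have h6 : ∀ i j, i < j → max (y i) (k (y i)) < y j := by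
    intro i j hij
    obtain ⟨m, rfl⟩ := Nat.exists_eq_add_of_lt hij
    calc max (y i) (k (y i)) ≤ b i := h2 i
    _ ≤ b (i + m) := h5 i (i + m) (Nat.le_add_right _ _)
    _ < y (i + m + 1) := h3 _
  -- main bound
  have main : ∀ N : ℕ, μ {A : ℕ → Bool | ∀ x, A x = A (k x)} ≤ (1 / 2 : ENNReal) ^ N := by
    intro N
    set L : ℕ := (Finset.range N).sup (fun i => max (y i) (k (y i))) + 1 with hL
    have hyL : ∀ i, i < N → y i < L ∧ k (y i) < L := by
      intro i hi
      have := Finset.le_sup (f := fun i => max (y i) (k (y i))) (Finset.mem_range.2 hi)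
      constructor
      · exact Nat.lt_succ_of_le (le_trans (le_max_left _ _) this)
      · exact Nat.lt_succ_of_le (le_trans (le_max_right _ _) this)
    set Q : ℕ → (ℕ → Bool) → Prop := fun m A => ∀ i, i < m → A (y i) = A (k (y i)) with hQdef
    set S : ℕ → Finset (Fin L → Bool) :=
      fun m => Finset.univ.filter (fun v : Fin L → Bool => Q m (extFn v)) with hSdef
    -- cardinality bound
    have card_bound : ∀ m, m ≤ N → (S m).card * 2 ^ m ≤ 2 ^ L := by
      intro m hm
      induction m with
      | zero =>
        simp only [pow_zero, mul_one]
        calc (S 0).card ≤ Finset.univ.card := Finset.card_filter_le _ _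
        _ = 2 ^ L := by simp [Finset.card_univ]
      | succ m ih =>
        have hmN : m < N := hm
        have hym : y m < L := (hyL m hmN).1
        have hkym : k (y m) < L := (hyL m hmN).2
        -- flip map
        set fl : (Fin L → Bool) → (Fin L → Bool) :=
          fun v => Function.update v ⟨y m, hym⟩ (!(v ⟨y m, hym⟩)) with hfl
        have hext_fl : ∀ v : (Fin L → Bool), ∀ j, j < L → j ≠ y m →
            extFn (fl v) j = extFn v j := by
          intro v j hj hne
          simp only [extFn, hj, dif_pos, hfl]
          rw [Function.update_of_ne]
          intro hcontra
          apply hne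
          exact congrArg Fin.val hcontra
        have hext_fl_ym : ∀ v : (Fin L → Bool), extFn (fl v) (y m) = !(extFn v (y m)) := by
          intro v
          simp only [extFn, hym, dif_pos, hfl]
          rw [Function.update_self]
        have hsub : S (m+1) ⊆ S m := by
          intro v hv
          rw [hSdef, Finset.mem_filter] at hv ⊢
          exact ⟨hv.1, fun i hi => hv.2 i (Nat.lt_succ_of_lt hi)⟩
        have hmaps : ∀ v ∈ S (m+1), fl v ∈ S m \ S (m+1) := by
          intro v hv
          rw [hSdef, Finset.mem_filter] at hv
          rw [Finset.mem_sdiff, hSdef, Finset.mem_filter]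
          have hconstr : ∀ i, i < m → extFn (fl v) (y i) = extFn (fl v) (k (y i)) := by
            intro i hi
            have him := h6 i m hi
            have hy_ne : y i ≠ y m := Nat.ne_of_lt (lt_of_le_of_lt (le_max_left _ _) him)
            have hky_ne : k (y i) ≠ y m := Nat.ne_of_lt (lt_of_le_of_lt (le_max_right _ _) him)
            have hiN : i < N := lt_trans hi hmN
            rw [hext_fl v (y i) (hyL i hiN).1 hy_ne, hext_fl v (k (y i)) (hyL i hiN).2 hky_ne]
            exact hv.2 i (Nat.lt_succ_of_lt hi)
          refine ⟨⟨Finset.mem_univ _, hconstr⟩, ?_⟩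
          rw [Finset.mem_filter]
          rintro ⟨-, habs⟩
          have hmth := habs m (Nat.lt_succ_self m)
          rw [hext_fl_ym v, hext_fl v (k (y m)) hkym (h1 m)] at hmth
          have horig : extFn v (y m) = extFn v (k (y m)) := hv.2 m (Nat.lt_succ_self m)
          rw [← horig] at hmth
          exact Bool.not_ne_self _ hmth
        have hinj : Set.InjOn fl (S (m+1)) := by
          intro v hv w hw hvw
          have : fl (fl v) = fl (fl w) := by rw [hvw]
          have hinv : ∀ u : Fin L → Bool, fl (fl u) = u := by
            intro u
            funext a
            by_cases ha : a = ⟨y m, hym⟩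
            · subst ha; simp [hfl, Function.update_self]
            · simp [hfl, Function.update_of_ne ha]
          rwa [hinv, hinv] at this
        have hcard1 : (S (m+1)).card ≤ (S m \ S (m+1)).card :=
          Finset.card_le_card_of_injOn fl hmaps hinj
        have hcard2 : (S m \ S (m+1)).card = (S m).card - (S (m+1)).card :=
          Finset.card_sdiff_of_subset hsub
        have hle : (S (m+1)).card ≤ (S m).card := Finset.card_le_card hsub
        have h2m : 2 * (S (m+1)).card ≤ (S m).card := by omega
        have ihm := ih (le_of_lt hmN)
        calc (S (m+1)).card * 2 ^ (m+1) = (2 * (S (m+1)).card) * 2 ^ m := by ring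
        _ ≤ (S m).card * 2 ^ m := Nat.mul_le_mul_right _ h2m
        _ ≤ 2 ^ L := ihm
    -- measure computation
    have hQN : ∀ A B : ℕ → Bool, (∀ j, j < L → A j = B j) → Q N A → Q N B := by
      intro A B hAB hA i hi
      rw [← hAB (y i) (hyL i hi).1, ← hAB (k (y i)) (hyL i hi).2]
      exact hA i hi
    have hmeas := measure_setOf_eq μ hμ (Q N) hQN
    have hsubset : {A : ℕ → Bool | ∀ x, A x = A (k x)} ⊆ {A | Q N A} := by
      intro A hA i _
      exact hA (y i)
    have hbd := card_bound N (le_refl N)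
    calc μ {A : ℕ → Bool | ∀ x, A x = A (k x)} ≤ μ {A | Q N A} := measure_mono hsubset
    _ = ((S N).card : ENNReal) * (1 / 2 : ENNReal) ^ L := hmeas
    _ ≤ (1 / 2 : ENNReal) ^ N := by
        have h2L : ((2 : ENNReal) ^ L) ≠ 0 := by positivity
        have h2Ltop : ((2 : ENNReal) ^ L) ≠ ⊤ := by
          exact ENNReal.pow_ne_top (by norm_num)
        have hcast : ((S N).card : ENNReal) * 2 ^ N ≤ 2 ^ L := by
          calc ((S N).card : ENNReal) * 2 ^ N = (((S N).card * 2 ^ N : ℕ) : ENNReal) := by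
                push_cast; ring
          _ ≤ ((2 ^ L : ℕ) : ENNReal) := by exact_mod_cast Nat.cast_le.2 hbd
          _ = 2 ^ L := by push_cast; ring
        rw [one_div, ← ENNReal.inv_pow, ← ENNReal.inv_pow]
        rw [ENNReal.le_inv_iff_mul_le]
        calc ((S N).card : ENNReal) * ((2 : ENNReal) ^ L)⁻¹ * 2 ^ N
            = ((S N).card : ENNReal) * 2 ^ N * ((2 : ENNReal) ^ L)⁻¹ := by ring
        _ ≤ (2 : ENNReal) ^ L * ((2 : ENNReal) ^ L)⁻¹ := mul_le_mul_left hcast _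
        _ = 1 := ENNReal.mul_inv_cancel h2L h2Ltop
  -- conclude
  by_contra hne
  have hpos : 0 < μ {A : ℕ → Bool | ∀ x, A x = A (k x)} := pos_iff_ne_zero.2 hne
  obtain ⟨N, hN⟩ := ENNReal.exists_inv_two_pow_lt hne
  have : (1 / 2 : ENNReal) ^ N < μ {A : ℕ → Bool | ∀ x, A x = A (k x)} := by
    simpa [one_div] using hN
  exact absurd (main N) (not_le.2 this)
end

section
/- For μ-almost every A ∈ 2^ω, the many-one degree of A contains an infinite antichain of 1-degrees: there is a family (B_i)_{i∈ω} of subsets of ω with B_i ≡_m A for all i and B_i ≰_1 B_j for all i ≠ j. -/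
open MeasureTheory

/-!
Let `B i` be `A` with every element of the `i`-th column `{⟨i, v⟩}` doubled. Each `B i` is
many-one equivalent to `A` as soon as `A ≠ ℕ`. An injective `g` reducing `B i` to `B j`, `i ≠ j`,
sends the two codes of `a = ⟨i, v⟩` to two distinct numbers, while `a` has only one code in
`B j`. So either one image is not a code at all, forcing `a ∉ A`, or one image codes some
`τ a ≠ a`, forcing `A a = A (τ a)`, with `τ` depending only on `g`. Both kinds of constraint on
infinitely many `a` define a null set: among infinitely many `y` with `τ y ≠ y` one can choose
`n` that are disjoint from their `τ`-images, and these `n` coincidences have probability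
`2 ^ (-n)`. There are only countably many computable `g`.
-/

open Finset

lemma two_pow_sub_mul_half_pow {k N : ℕ} (hk : k ≤ N) :
    (2 : ENNReal) ^ (N - k) * (1 / 2) ^ N = (1 / 2) ^ k := by
  obtain ⟨d, rfl⟩ := Nat.exists_eq_add_of_le' hk
  rw [Nat.add_sub_cancel, pow_add, ← mul_assoc, ← mul_pow, one_div,
    ENNReal.mul_inv_cancel two_ne_zero ENNReal.ofNat_ne_top, one_pow, one_mul]

lemma ENNReal.eq_zero_of_forall_le_half_pow {x : ENNReal} (h : ∀ n : ℕ, x ≤ (1 / 2) ^ n) :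
    x = 0 :=
  le_antisymm (ge_of_tendsto' (ENNReal.tendsto_pow_atTop_nhds_zero_of_lt_one
    (by norm_num : (1 / 2 : ENNReal) < 1)) h) bot_le

lemma mem_cylinder_ofFn_s15 {N : ℕ} {g : ℕ → Bool} {X : ℕ → Bool} :
    X ∈ _root_.cylinder (List.ofFn fun i : Fin N => g i) ↔ ∀ i < N, X i = g i := by
  simp only [_root_.cylinder, Set.mem_ofPred_eq, List.length_ofFn]
  refine forall₂_congr fun i hi => ?_
  rw [List.getD_eq_getElem _ _ (by simpa using hi), List.getElem_ofFn]

lemma exists_finset_disjoint_image {X : Set ℕ} (hX : X.Infinite) {τ : ℕ → ℕ}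
    (hτ : ∀ y ∈ X, τ y ≠ y) (n : ℕ) :
    ∃ V : Finset ℕ, ↑V ⊆ X ∧ #V = n ∧ Disjoint V (V.image τ) := by
  classical
  by_cases hfib : ∃ c, {y ∈ X | τ y = c}.Infinite
  · -- An infinite fibre `τ⁻¹ c` does not contain `c`, so any finite part of it works.
    obtain ⟨c, hc⟩ := hfib
    obtain ⟨V, hVc, rfl⟩ := hc.exists_subset_card_eq n
    refine ⟨V, fun y hy => (hVc hy).1, rfl, disjoint_left.2 fun y hy hyτ => ?_⟩
    obtain ⟨y', hy', rfl⟩ := mem_image.1 hyτ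
    have hcV : c ∈ V := (hVc hy').2 ▸ hy
    exact hτ c (hVc hcV).1 (hVc hcV).2
  push Not at hfib
  induction n with
  | zero => exact ⟨∅, by simp, rfl, by simp⟩
  | succ n ih =>
    obtain ⟨V, hVX, rfl, hV⟩ := ih
    have hbad : ((↑(V ∪ V.image τ) : Set ℕ) ∪ ⋃ c ∈ V, {y ∈ X | τ y = c}).Finite :=
      (finite_toSet _).union (V.finite_toSet.biUnion fun c _ => hfib c)
    obtain ⟨w, hwX, hw⟩ := (hX.sdiff hbad).nonempty
    simp only [Set.mem_union, mem_coe, mem_union, Set.mem_iUnion, Set.mem_ofPred_eq, exists_prop,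
      not_or, not_exists, not_and] at hw
    obtain ⟨⟨hwV, hwτV⟩, hτwV⟩ := hw
    have hτwV' : τ w ∉ V := fun h => hτwV _ h hwX rfl
    refine ⟨insert w V, ?_, card_insert_of_notMem hwV, ?_⟩
    · simpa [Set.insert_subset_iff] using ⟨hwX, hVX⟩
    · rw [image_insert, disjoint_insert_left, disjoint_insert_right, mem_insert, not_or]
      exact ⟨⟨(hτ w hwX).symm, hwτV⟩, hτwV', hV⟩

namespace IsFairCoin

variable {μ : Measure (ℕ → Bool)}

lemma measure_eqOn_le (hμ : IsFairCoin μ) (S : Finset ℕ) (b : ℕ → Bool) :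
    μ {A | ∀ n ∈ S, A n = b n} ≤ (1 / 2) ^ #S := by
  classical
  set N := S.sup id + 1
  have hSN : S ⊆ range N := fun n hn => mem_range.2 (Nat.lt_succ_of_le (le_sup (f := id) hn))
  -- Complete `b|S` to a string of length `N` by any values on the `N - #S` free positions.
  let fill (j : ↥(range N \ S) → Bool) (i : ℕ) : Bool :=
    if h : i ∈ range N \ S then j ⟨i, h⟩ else b i
  have hcover : {A : ℕ → Bool | ∀ n ∈ S, A n = b n} ⊆
      ⋃ j, _root_.cylinder (List.ofFn fun i : Fin N => fill j i) := by
    intro A hA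
    refine Set.mem_iUnion.2 ⟨fun i => A i, mem_cylinder_ofFn_s15.2 fun i hi => ?_⟩
    by_cases h : i ∈ range N \ S
    · simp only [fill, dif_pos h]
    · have hiS : i ∈ S := by simpa [hi] using h
      simp only [fill, dif_neg h, hA i hiS]
  calc μ {A | ∀ n ∈ S, A n = b n}
      ≤ ∑' j, μ (_root_.cylinder (List.ofFn fun i : Fin N => fill j i)) :=
        (measure_mono hcover).trans (measure_iUnion_le _)
    _ = 2 ^ (N - #S) * (1 / 2) ^ N := by
        simp only [hμ _, List.length_ofFn, tsum_fintype, sum_const, card_univ, nsmul_eq_mul,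
          Fintype.card_fun, Fintype.card_coe, Fintype.card_bool, card_sdiff_of_subset hSN,
          card_range]
        push_cast; rfl
    _ = (1 / 2) ^ #S := two_pow_sub_mul_half_pow (by simpa using card_le_card hSN)

lemma measure_eqOn_eq_zero (hμ : IsFairCoin μ) {S : Set ℕ} (hS : S.Infinite) (b : ℕ → Bool) :
    μ {A | ∀ n ∈ S, A n = b n} = 0 := by
  refine ENNReal.eq_zero_of_forall_le_half_pow fun n => ?_
  obtain ⟨F, hFS, rfl⟩ := hS.exists_subset_card_eq n
  refine (measure_mono ?_).trans (hμ.measure_eqOn_le F b)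
  exact fun A hA n hn => hA n (hFS hn)

lemma measure_eq_comp_le (hμ : IsFairCoin μ) {V : Finset ℕ} {τ : ℕ → ℕ}
    (hV : Disjoint V (V.image τ)) :
    μ {A | ∀ y ∈ V, A y = A (τ y)} ≤ (1 / 2) ^ #V := by
  classical
  set W := V.image τ
  -- The values on `W` determine those on `V`: `2 ^ #W` patterns on `#V + #W` coordinates.
  let pattern (ε : ↥W → Bool) (n : ℕ) : Bool :=
    let m := if n ∈ V then τ n else n
    if h : m ∈ W then ε ⟨m, h⟩ else false
  have hcover : {A : ℕ → Bool | ∀ y ∈ V, A y = A (τ y)} ⊆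
      ⋃ ε, {A | ∀ n ∈ V ∪ W, A n = pattern ε n} := by
    intro A hA
    refine Set.mem_iUnion.2 ⟨fun w => A w, fun n hn => ?_⟩
    by_cases hnV : n ∈ V
    · have hτn : τ n ∈ W := mem_image_of_mem τ hnV
      simp only [pattern, if_pos hnV, dif_pos hτn, hA n hnV]
    · have hnW : n ∈ W := by simpa [hnV] using hn
      simp only [pattern, if_neg hnV, dif_pos hnW]
  calc μ {A | ∀ y ∈ V, A y = A (τ y)}
      ≤ ∑' ε, μ {A | ∀ n ∈ V ∪ W, A n = pattern ε n} :=
        (measure_mono hcover).trans (measure_iUnion_le _)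
    _ ≤ ∑' _ : ↥W → Bool, (1 / 2 : ENNReal) ^ (#V + #W) := by
        gcongr with ε
        rw [← card_union_of_disjoint hV]
        exact hμ.measure_eqOn_le _ _
    _ = 2 ^ (#V + #W - #V) * (1 / 2) ^ (#V + #W) := by
        simp only [tsum_fintype, sum_const, card_univ, nsmul_eq_mul, Fintype.card_fun,
          Fintype.card_coe, Fintype.card_bool, Nat.add_sub_cancel_left]
        push_cast; rfl
    _ = (1 / 2) ^ #V := two_pow_sub_mul_half_pow (Nat.le_add_right _ _)

lemma measure_eq_comp_eq_zero (hμ : IsFairCoin μ) {X : Set ℕ} (hX : X.Infinite) {τ : ℕ → ℕ}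
    (hτ : ∀ y ∈ X, τ y ≠ y) :
    μ {A | ∀ y ∈ X, A y = A (τ y)} = 0 := by
  refine ENNReal.eq_zero_of_forall_le_half_pow fun n => ?_
  obtain ⟨V, hVX, rfl, hV⟩ := exists_finset_disjoint_image hX hτ n
  refine (measure_mono ?_).trans (hμ.measure_eq_comp_le hV)
  exact fun A hA y hy => hA y (hVX hy)

lemma measure_eq_false_or_eq_comp_eq_zero (hμ : IsFairCoin μ) {X : Set ℕ} (hX : X.Infinite)
    (P : ℕ → Prop) {τ : ℕ → ℕ} (hτ : ∀ y ∈ X, ¬ P y → τ y ≠ y) :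
    μ {A | ∀ y ∈ X, (P y → A y = false) ∧ (¬ P y → A y = A (τ y))} = 0 := by
  by_cases hP : {y ∈ X | P y}.Infinite
  · refine measure_mono_null ?_ (hμ.measure_eqOn_eq_zero hP fun _ => false)
    exact fun A hA y hy => (hA y hy.1).1 hy.2
  · have hnP : {y ∈ X | ¬ P y}.Infinite :=
      (hX.sdiff (Set.not_infinite.1 hP)).mono fun y hy => ⟨hy.1, fun h => hy.2 ⟨hy.1, h⟩⟩
    refine measure_mono_null ?_ (hμ.measure_eq_comp_eq_zero hnP fun y hy => hτ y hy.1 hy.2)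
    exact fun A hA y hy => (hA y hy.1).2 hy.2

end IsFairCoin

open Nat (pair unpair)

/-- `⟨a, k⟩` codes an element `a` of `doubleColumn A i` when `k < copies i a`: elements of
the `i`-th column `{⟨i, v⟩}` get the two codes `⟨a, 0⟩, ⟨a, 1⟩`, all others only `⟨a, 0⟩`. -/
def copies (i a : ℕ) : ℕ := if (unpair a).1 = i then 2 else 1

def IsCode (i z : ℕ) : Prop := (unpair z).2 < copies i (unpair z).1

instance (i : ℕ) : DecidablePred (IsCode i) := fun _ => Nat.decLt _ _

def doubleColumn (A : ℕ → Bool) (i : ℕ) : Set ℕ := {z | IsCode i z ∧ A (unpair z).1 = true}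

lemma copies_pos (i a : ℕ) : 0 < copies i a := by
  unfold copies; split <;> norm_num

lemma eq_pair_zero_of_isCode {j w : ℕ} (hw : IsCode j w) (h1 : copies j (unpair w).1 = 1) :
    w = pair (unpair w).1 0 := by
  conv_lhs => rw [← Nat.pair_unpair w]
  unfold IsCode at hw
  congr 1
  omega

lemma primrecPred_isCode (i : ℕ) : PrimrecPred (IsCode i) := by
  have hcopies : Primrec (copies i) :=
    Primrec.ite (Primrec.eq.comp (Primrec.fst.comp Primrec.unpair) (Primrec.const i))
      (Primrec.const 2) (Primrec.const 1)
  exact Primrec.nat_lt.comp (Primrec.snd.comp Primrec.unpair)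
    (hcopies.comp (Primrec.fst.comp Primrec.unpair))

lemma doubleColumn_manyOneEquiv {A : ℕ → Bool} {n₀ : ℕ} (hn₀ : A n₀ = false) (i : ℕ) :
    ManyOneEquiv (· ∈ doubleColumn A i) (fun n => A n = true) := by
  constructor
  · refine ⟨fun z => if IsCode i z then (unpair z).1 else n₀,
      (Primrec.ite (primrecPred_isCode i) (Primrec.fst.comp Primrec.unpair)
        (Primrec.const n₀)).to_comp, fun z => ?_⟩
    by_cases hz : IsCode i z <;> simp [doubleColumn, hz, hn₀]
  · refine ⟨fun a => pair a 0, (Primrec₂.natPair.comp Primrec.id (Primrec.const 0)).to_comp,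
      fun a => ?_⟩
    simp [doubleColumn, IsCode, copies_pos]

lemma unpair_fst_ne_of_isCode_of_isCode {j a : ℕ} (ha : copies j a = 1) {g : ℕ → ℕ}
    (hg : Function.Injective g) (h0 : IsCode j (g (pair a 0))) (h1 : IsCode j (g (pair a 1)))
    (hsrc : (unpair (g (pair a 0))).1 = a) :
    (unpair (g (pair a 1))).1 ≠ a := by
  intro hsrc'
  have e0 := eq_pair_zero_of_isCode h0 (by rw [hsrc]; exact ha)
  have e1 := eq_pair_zero_of_isCode h1 (by rw [hsrc']; exact ha)
  rw [hsrc] at e0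
  rw [hsrc'] at e1
  exact absurd (Nat.pair_eq_pair.1 (hg (e0.trans e1.symm))).2 (by norm_num)

lemma IsFairCoin.measure_reduces_doubleColumn_eq_zero {μ : Measure (ℕ → Bool)}
    (hμ : IsFairCoin μ) {i j : ℕ} (hij : i ≠ j) {g : ℕ → ℕ} (hg : Function.Injective g) :
    μ {A | ∀ z, z ∈ doubleColumn A i ↔ g z ∈ doubleColumn A j} = 0 := by
  set X := Set.range (pair i)
  have hX : X.Infinite := Set.infinite_range_of_injective fun _ _ h => (Nat.pair_eq_pair.1 h).2
  have hcopies_i : ∀ a ∈ X, copies i a = 2 := by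
    rintro _ ⟨v, rfl⟩; simp [copies]
  have hcopies_j : ∀ a ∈ X, copies j a = 1 := by
    rintro _ ⟨v, rfl⟩; simp [copies, hij]
  let w (k a : ℕ) : ℕ := g (pair a k)
  let P (a : ℕ) : Prop := ¬ (IsCode j (w 0 a) ∧ IsCode j (w 1 a))
  let τ (a : ℕ) : ℕ := if (unpair (w 0 a)).1 = a then (unpair (w 1 a)).1 else (unpair (w 0 a)).1
  have hτ : ∀ a ∈ X, ¬ P a → τ a ≠ a := by
    intro a ha hPa
    obtain ⟨h0, h1⟩ := not_not.1 hPa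
    by_cases hsrc : (unpair (w 0 a)).1 = a
    · simpa only [τ, if_pos hsrc] using
        unpair_fst_ne_of_isCode_of_isCode (hcopies_j a ha) hg h0 h1 hsrc
    · simpa only [τ, if_neg hsrc] using hsrc
  refine measure_mono_null ?_ (hμ.measure_eq_false_or_eq_comp_eq_zero hX P hτ)
  intro A hA a ha
  have hred : ∀ k < 2, (A a = true ↔ IsCode j (w k a) ∧ A (unpair (w k a)).1 = true) := by
    intro k hk
    simpa [doubleColumn, IsCode, hcopies_i a ha, hk] using hA (pair a k)
  constructor
  · intro hPa
    by_contra hAa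
    exact hPa ⟨((hred 0 (by norm_num)).1 (by simpa using hAa)).1,
      ((hred 1 (by norm_num)).1 (by simpa using hAa)).1⟩
  · intro hPa
    obtain ⟨h0, h1⟩ := not_not.1 hPa
    have hτ_src : τ a = (unpair (w 0 a)).1 ∨ τ a = (unpair (w 1 a)).1 := by
      by_cases hsrc : (unpair (w 0 a)).1 = a <;> simp [τ, hsrc]
    rw [Bool.eq_iff_iff]
    rcases hτ_src with h | h
    · rw [h, hred 0 (by norm_num), and_iff_right h0]
    · rw [h, hred 1 (by norm_num), and_iff_right h1]

/-- For μ-almost every `A ∈ 2^ω`, the many-one degree of `A` contains an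
infinite antichain of 1-degrees. -/
theorem stmt_15 (μ : Measure (ℕ → Bool)) (hμ : IsFairCoin μ) :
    ∀ᵐ A ∂μ, ∃ B : ℕ → Set ℕ,
      (∀ i, ManyOneEquiv (· ∈ B i) (fun n => A n = true)) ∧
      (∀ i j, i ≠ j → ¬ OneOneReducible (· ∈ B i) (· ∈ B j)) := by
  have h_not_univ : ∀ᵐ A ∂μ, ∃ n, A n = false := by
    filter_upwards [measure_eq_zero_iff_ae_notMem.1
      (hμ.measure_eqOn_eq_zero Set.infinite_univ fun _ => true)] with A hA
    simpa using hA
  have h_antichain : ∀ᵐ A ∂μ, ∀ (i j : ℕ) (g : {g : ℕ → ℕ // Computable g}), i ≠ j →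
      Function.Injective g.1 → ¬ ∀ z, z ∈ doubleColumn A i ↔ g.1 z ∈ doubleColumn A j := by
    simp only [ae_all_iff, Filter.eventually_imp_distrib_left]
    intro i j g hij hg
    exact measure_eq_zero_iff_ae_notMem.1 (hμ.measure_reduces_doubleColumn_eq_zero hij hg)
  filter_upwards [h_not_univ, h_antichain] with A ⟨n₀, hn₀⟩ hA
  refine ⟨doubleColumn A, doubleColumn_manyOneEquiv hn₀, ?_⟩
  rintro i j hij ⟨g, hgc, hg, hred⟩
  exact hA i j ⟨g, hgc⟩ hij hg hred
end

section
/- If A ∈ 2^ω is Martin-Löf random, then the many-one degree of A contains an infinite antichain of 1-degrees: there is a family (B_i)_{i∈ω} of subsets of ω with B_i ≡_m A for all i and B_i ≰_1 B_j for all i ≠ j. -/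
/-!
The set `B i` is `A` with every bit `n` of the `i`-th column of the pairing function written
twice (and every other bit once); it is many-one equivalent to `A`. If `f` were a one-one
reduction of `B i` to `B j` with `i ≠ j`, then for `n` in column `i` the two copies of bit `n` in
`B i` cannot both be sent to the single copy of bit `n` in `B j`, and searching for the one that
escapes computes `g n ≠ n` with `A (g n) = A n`.

Such a computable self-correlation on an infinite computable set contradicts randomness. Either
some value `q` is taken infinitely often by `g`, and then `A n = A q` along a computable
increasing sequence, or `g` tends to infinity and a greedy computable sequence `n₀ < n₁ < ⋯`
makes all the points `nₜ` and `g nₜ` pairwise distinct. In both cases `A` agrees on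
computable pairs `(aₜ, bₜ)` with the `aₜ` distinct and no `bₜ` among them; the sequences
agreeing on the first `c` pairs then have measure at most `2^{-c}`, giving a Martin-Löf test.
-/

open MeasureTheory

/-- `A` is Martin-Löf random (w.r.t. `μ`) if it avoids every Martin-Löf test. -/
def MLRandom (μ : Measure (ℕ → Bool)) (A : ℕ → Bool) : Prop :=
  ∀ U : ℕ → Set (ℕ → Bool), MLTest μ U → A ∉ ⋂ n, U n

open Function Filter
open scoped ENNReal

section Computability

variable {α β γ : Type*} [Primcodable α] [Primcodable β] [Primcodable γ]

theorem ComputablePred.and {p q : α → Prop} (hp : ComputablePred p) (hq : ComputablePred q) :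
    ComputablePred fun a => p a ∧ q a := by
  classical
  exact Computable.computablePred <|
    (Primrec.and.to_comp.comp hp.decide hq.decide).of_eq fun a => by simp

theorem ComputablePred.comp {p : β → Prop} (hp : ComputablePred p) {f : α → β}
    (hf : Computable f) : ComputablePred fun a => p (f a) := by
  classical
  exact Computable.computablePred (hp.decide.comp hf)

theorem PrimrecRel.computablePred_comp {R : β → γ → Prop} (hR : PrimrecRel R) {f : α → β}
    {g : α → γ} (hf : Computable f) (hg : Computable g) :
    ComputablePred fun a => R (f a) (g a) :=
  hR.computablePred.comp (hf.pair hg)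

theorem Computable.nat_iterate {f : α → ℕ} {g : α → β} {h : α → β → β} (hf : Computable f)
    (hg : Computable g) (hh : Computable₂ h) : Computable fun a => (h a)^[f a] (g a) := by
  have hstep : Computable₂ fun (a : α) (p : ℕ × β) => h a p.2 :=
    hh.comp Computable.fst (Computable.snd.comp Computable.snd)
  exact (Computable.nat_rec hf hg hstep).of_eq fun a => by
    induction f a <;> simp [*, -Function.iterate_succ, Function.iterate_succ']

theorem ComputablePred.forall_lt {P : ℕ → α → Prop}
    (hP : ComputablePred fun p : ℕ × α => P p.1 p.2) :
    ComputablePred fun p : ℕ × α => ∀ t < p.1, P t p.2 := by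
  classical
  have hd : Computable fun p : ℕ × α => decide (P p.1 p.2) := hP.decide
  have ht : Computable fun q : (ℕ × α) × (ℕ × Bool) => q.2.1 := Computable.fst.comp .snd
  have hx : Computable fun q : (ℕ × α) × (ℕ × Bool) => q.1.2 := Computable.snd.comp .fst
  have hPt := hd.comp (ht.pair hx)
  have hstep := Primrec.and.to_comp.comp (Computable.snd.comp Computable.snd) hPt
  have hrec := Computable.nat_rec Computable.fst (Computable.const true) hstep.to₂
  refine Computable.computablePred (hrec.of_eq fun a => ?_)
  obtain ⟨c, x⟩ := a
  induction c with
  | zero => simp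
  | succ c ih =>
    simp only at ih ⊢
    rw [ih, ← Bool.decide_and]
    simp only [Nat.lt_succ_iff_lt_or_eq, or_imp, forall_and, forall_eq]

end Computability

open Finset in
theorem card_filter_forall_eq_le {ι κ β : Type*} [Fintype ι] [DecidableEq ι] [Fintype κ]
    [Fintype β] [DecidableEq β] {a b : κ → ι} (ha : Injective a) (hb : ∀ t u, b t ≠ a u) :
    #{v : ι → β | ∀ t, v (a t) = v (b t)} ≤ Fintype.card β ^ (Fintype.card ι - Fintype.card κ) := by
  classical
  let T := {y : ι // y ∉ Set.range a}
  have hinj : Set.InjOn (fun (v : ι → β) (y : T) => v y)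
      ↑({v : ι → β | ∀ t, v (a t) = v (b t)} : Finset _) := by
    intro v hv w hw hvw
    simp only [coe_filter, mem_univ, true_and, Set.mem_ofPred_eq] at hv hw
    funext x
    by_cases hx : x ∈ Set.range a
    · obtain ⟨t, rfl⟩ := hx
      have hbt : b t ∉ Set.range a := fun ⟨u, hu⟩ => hb t u hu.symm
      rw [hv t, hw t]
      exact congrFun hvw ⟨b t, hbt⟩
    · exact congrFun hvw ⟨x, hx⟩
  have hT : Fintype.card T = Fintype.card ι - Fintype.card κ := by
    rw [Fintype.card_subtype_compl, Set.card_range_of_injective ha]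
  calc #{v : ι → β | ∀ t, v (a t) = v (b t)}
      ≤ #(univ : Finset (T → β)) := card_le_card_of_injOn _ (fun _ _ => mem_coe.2 (mem_univ _)) hinj
    _ = Fintype.card β ^ (Fintype.card ι - Fintype.card κ) := by
      rw [card_univ, Fintype.card_fun, hT]

theorem mem_cylinder_ofFn_s16 (X : ℕ → Bool) (L : ℕ) :
    X ∈ cylinder (List.ofFn fun k : Fin L => X k) := by
  intro i hi
  rw [List.length_ofFn] at hi
  rw [List.getD_eq_getElem _ _ (by simpa using hi), List.getElem_ofFn]

theorem ENNReal.two_pow_sub_mul_half_pow {c L : ℕ} (h : c ≤ L) :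
    (2 : ℝ≥0∞) ^ (L - c) * (1 / 2) ^ L = (1 / 2) ^ c := by
  obtain ⟨k, rfl⟩ := Nat.exists_eq_add_of_le' h
  rw [Nat.add_sub_cancel, pow_add, ← mul_assoc, ← mul_pow, one_div,
    ENNReal.mul_inv_cancel two_ne_zero ENNReal.ofNat_ne_top, one_pow, one_mul]

open Finset in
theorem IsFairCoin.measure_forall_eq_le {μ : Measure (ℕ → Bool)} (hμ : IsFairCoin μ) {c L : ℕ}
    {a b : Fin c → Fin L} (ha : Injective a) (hb : ∀ t u, b t ≠ a u) :
    μ {X | ∀ t, X (a t) = X (b t)} ≤ (1 / 2) ^ c := by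
  set S : Finset (Fin L → Bool) := {v | ∀ t, v (a t) = v (b t)}
  have hsub : {X : ℕ → Bool | ∀ t, X (a t) = X (b t)} ⊆ ⋃ v ∈ S, cylinder (List.ofFn v) :=
    fun X hX => Set.mem_biUnion (x := fun k : Fin L => X k) (by simpa [S] using hX)
      (mem_cylinder_ofFn_s16 X L)
  have hcL : c ≤ L := by simpa using Fintype.card_le_of_injective a ha
  calc μ {X | ∀ t, X (a t) = X (b t)}
      ≤ ∑ v ∈ S, μ (cylinder (List.ofFn v)) :=
        (measure_mono hsub).trans (measure_biUnion_finset_le _ _)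
    _ = #S * (1 / 2) ^ L := by
      rw [sum_congr rfl fun v _ => (hμ (List.ofFn v)).trans (by rw [List.length_ofFn]),
        sum_const, nsmul_eq_mul]
    _ ≤ 2 ^ (L - c) * (1 / 2) ^ L := by
      gcongr
      have hS : #S ≤ 2 ^ (L - c) := by
        convert card_filter_forall_eq_le (β := Bool) ha hb using 3 <;> simp
      exact_mod_cast hS
    _ = (1 / 2) ^ c := ENNReal.two_pow_sub_mul_half_pow hcL

theorem exists_forall_lt_and_lt (a b : ℕ → ℕ) (c : ℕ) : ∃ L, ∀ t < c, a t < L ∧ b t < L := by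
  refine ⟨∑ t ∈ Finset.range c, (a t + b t + 1), fun t ht => ?_⟩
  have := Finset.single_le_sum (f := fun t => a t + b t + 1) (fun _ _ => Nat.zero_le _)
    (Finset.mem_range.2 ht)
  omega

section AgreementTest

variable (a b : ℕ → ℕ)

def AgreeingPrefix (c : ℕ) (σ : List Bool) : Prop :=
  ∀ t < c, a t < σ.length ∧ b t < σ.length ∧ σ.getD (a t) false = σ.getD (b t) false

def agreementTest (c : ℕ) : Set (ℕ → Bool) :=
  ⋃ σ ∈ {σ | AgreeingPrefix a b c σ}, cylinder σ

variable {a b}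

theorem computablePred_agreeingPrefix (ha : Computable a) (hb : Computable b) :
    ComputablePred fun p : ℕ × List Bool => AgreeingPrefix a b p.1 p.2 := by
  have hlen : Computable fun p : ℕ × List Bool => p.2.length := Computable.list_length.comp .snd
  have hget : Computable₂ fun (σ : List Bool) (n : ℕ) => σ.getD n false :=
    (Primrec.list_getD false).to_comp
  have haσ := hget.comp Computable.snd (ha.comp Computable.fst)
  have hbσ := hget.comp Computable.snd (hb.comp Computable.fst)
  exact ComputablePred.forall_lt (P := fun t (σ : List Bool) =>
      a t < σ.length ∧ b t < σ.length ∧ σ.getD (a t) false = σ.getD (b t) false) <|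
    (Primrec.nat_lt.computablePred_comp (ha.comp .fst) hlen).and <|
    (Primrec.nat_lt.computablePred_comp (hb.comp .fst) hlen).and <|
    Primrec.eq.computablePred_comp haσ hbσ

theorem agreementTest_subset (c : ℕ) :
    agreementTest a b c ⊆ {X | ∀ t < c, X (a t) = X (b t)} := by
  intro X hX t ht
  obtain ⟨σ, hσ, hXσ⟩ := Set.mem_iUnion₂.1 hX
  obtain ⟨haσ, hbσ, hab⟩ := hσ t ht
  rw [hXσ _ haσ, hXσ _ hbσ, hab]

theorem mem_agreementTest {X : ℕ → Bool} (hX : ∀ t, X (a t) = X (b t)) (c : ℕ) :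
    X ∈ agreementTest a b c := by
  obtain ⟨L, hL⟩ := exists_forall_lt_and_lt a b c
  have hXL := mem_cylinder_ofFn_s16 X L
  refine Set.mem_biUnion (x := List.ofFn fun k : Fin L => X k) (fun t ht => ?_) hXL
  have haL : a t < (List.ofFn fun k : Fin L => X k).length := by simpa using (hL t ht).1
  have hbL : b t < (List.ofFn fun k : Fin L => X k).length := by simpa using (hL t ht).2
  exact ⟨haL, hbL, by rw [← hXL _ haL, ← hXL _ hbL, hX t]⟩

theorem IsFairCoin.measure_agreementTest_le {μ : Measure (ℕ → Bool)} (hμ : IsFairCoin μ)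
    (ha : Injective a) (hba : ∀ t u, b t ≠ a u) (c : ℕ) :
    μ (agreementTest a b c) ≤ (1 / 2) ^ c := by
  obtain ⟨L, hL⟩ := exists_forall_lt_and_lt a b c
  let a' : Fin c → Fin L := fun t => ⟨a t, (hL t t.2).1⟩
  let b' : Fin c → Fin L := fun t => ⟨b t, (hL t t.2).2⟩
  have ha' : Injective a' := fun t u h => Fin.ext (ha (congrArg Fin.val h))
  have hba' : ∀ t u, b' t ≠ a' u := fun t u h => hba t u (congrArg Fin.val h)
  have hsub : agreementTest a b c ⊆ {X | ∀ t, X (a' t) = X (b' t)} :=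
    fun X hX t => agreementTest_subset c hX t t.2
  exact (measure_mono hsub).trans (hμ.measure_forall_eq_le ha' hba')

theorem IsFairCoin.not_mlRandom_of_agree {μ : Measure (ℕ → Bool)} (hμ : IsFairCoin μ)
    (ha : Computable a) (hb : Computable b) (ha_inj : Injective a) (hba : ∀ t u, b t ≠ a u)
    {X : ℕ → Bool} (hX : ∀ t, X (a t) = X (b t)) : ¬MLRandom μ X := fun hrand =>
  hrand (agreementTest a b)
    ⟨⟨AgreeingPrefix a b, (computablePred_agreeingPrefix ha hb).to_re, fun _ => rfl⟩,
      hμ.measure_agreementTest_le ha_inj hba⟩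
    (Set.mem_iInter.2 (mem_agreementTest hX))

end AgreementTest

theorem exists_computable_chain {R : ℕ → ℕ → Prop}
    (hR : ComputablePred fun p : ℕ × ℕ => R p.1 p.2) (hex : ∀ m, ∃ n, R m n) :
    ∃ a : ℕ → ℕ, Computable a ∧ ∀ t, R (a t) (a (t + 1)) := by
  classical
  have hnext := (Computable.find hR hex).comp (Computable.snd (α := ℕ) (β := ℕ))
  refine ⟨fun t => (fun m => Nat.find (hex m))^[t] 0,
    Computable.nat_iterate Computable.id (Computable.const 0) hnext.to₂, fun t => ?_⟩
  dsimp only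
  rw [Function.iterate_succ_apply']
  exact Nat.find_spec (hex _)

theorem ne_of_interleaved {a b : ℕ → ℕ} (ha : StrictMono a) (hab : ∀ t, b t < a (t + 1))
    (hba : ∀ t, a t < b (t + 1)) (hne : ∀ t, b t ≠ a t) (t u : ℕ) : b t ≠ a u := by
  rcases lt_trichotomy u t with h | rfl | h
  · obtain ⟨k, rfl⟩ := Nat.exists_eq_add_of_lt h
    exact ((ha.monotone (Nat.le_add_right u k)).trans_lt (hba _)).ne'
  · exact hne _
  · exact ((hab t).trans_le (ha.monotone h)).ne

section Randomness

variable {μ : Measure (ℕ → Bool)} {X : ℕ → Bool}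

theorem IsFairCoin.not_mlRandom_of_frequently_eq (hμ : IsFairCoin μ) {T : ℕ → Prop}
    (hT : ComputablePred T) (hTinf : ∃ᶠ n in atTop, T n) {q : ℕ}
    (hTq : ∀ n, T n → n ≠ q ∧ X n = X q) : ¬MLRandom μ X := by
  have hR : ComputablePred fun p : ℕ × ℕ => p.1 < p.2 ∧ T p.2 :=
    (Primrec.nat_lt.computablePred_comp .fst .snd).and (hT.comp .snd)
  obtain ⟨a, ha, hchain⟩ := exists_computable_chain hR (frequently_atTop'.1 hTinf)
  have hmono : StrictMono fun t => a (t + 1) := strictMono_nat_of_lt_succ fun t => (hchain _).1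
  exact hμ.not_mlRandom_of_agree (ha.comp .succ) (Computable.const q) hmono.injective
    (fun _ u => (hTq _ (hchain u).2).1.symm) fun t => (hTq _ (hchain t).2).2

theorem IsFairCoin.not_mlRandom_of_forall_exists_lt (hμ : IsFairCoin μ) {S : ℕ → Prop}
    (hS : ComputablePred S) {g : ℕ → ℕ} (hg : Computable g)
    (hgX : ∀ n, S n → g n ≠ n ∧ X (g n) = X n) (hgrow : ∀ M, ∃ n, S n ∧ M < n ∧ M < g n) :
    ¬MLRandom μ X := by
  have hM : Computable fun p : ℕ × ℕ => max p.1 (g p.1) :=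
    Primrec.nat_max.to_comp.comp .fst (hg.comp .fst)
  have hR : ComputablePred fun p : ℕ × ℕ =>
      S p.2 ∧ max p.1 (g p.1) < p.2 ∧ max p.1 (g p.1) < g p.2 :=
    (hS.comp .snd).and <| (Primrec.nat_lt.computablePred_comp hM .snd).and
      (Primrec.nat_lt.computablePred_comp hM (hg.comp .snd))
  obtain ⟨a, ha, hchain⟩ := exists_computable_chain hR fun m => hgrow (max m (g m))
  have hmono : StrictMono fun t => a (t + 1) :=
    strictMono_nat_of_lt_succ fun t => (le_max_left _ _).trans_lt (hchain (t + 1)).2.1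
  have hne := ne_of_interleaved hmono
    (fun t => (le_max_right _ _).trans_lt (hchain (t + 1)).2.1)
    (fun t => (le_max_left _ _).trans_lt (hchain (t + 1)).2.2)
    (fun t => (hgX _ (hchain t).1).1)
  exact hμ.not_mlRandom_of_agree (ha.comp .succ) (hg.comp (ha.comp .succ)) hmono.injective
    hne fun t => ((hgX _ (hchain t).1).2).symm

theorem IsFairCoin.not_mlRandom_of_correlated (hμ : IsFairCoin μ) {S : ℕ → Prop}
    (hS : ComputablePred S) (hSinf : ∃ᶠ n in atTop, S n) {g : ℕ → ℕ} (hg : Computable g)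
    (hgX : ∀ n, S n → g n ≠ n ∧ X (g n) = X n) : ¬MLRandom μ X := by
  by_cases hfib : ∃ q, ∃ᶠ n in atTop, S n ∧ g n = q
  · obtain ⟨q, hq⟩ := hfib
    have hT : ComputablePred fun n => S n ∧ g n = q :=
      hS.and (Primrec.eq.computablePred_comp hg (Computable.const q))
    refine hμ.not_mlRandom_of_frequently_eq (q := q) hT hq fun n ⟨hn, hgn⟩ => ?_
    rw [← hgn]
    exact ⟨(hgX n hn).1.symm, (hgX n hn).2.symm⟩
  · push Not at hfib
    refine hμ.not_mlRandom_of_forall_exists_lt hS hg hgX fun M => ?_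
    have hlarge : ∀ᶠ n in atTop, M < n ∧ ∀ q ∈ Finset.range (M + 1), S n → g n ≠ q :=
      (eventually_gt_atTop M).and ((Finset.range (M + 1)).eventually_all.2 fun q _ => hfib q)
    obtain ⟨n, hn, hMn, hgn⟩ := (hSinf.and_eventually hlarge).exists
    refine ⟨n, hn, hMn, not_le.1 fun h => ?_⟩
    exact hgn (g n) (Finset.mem_range.2 (Nat.lt_succ_of_le h)) hn rfl

end Randomness

section Padding

variable (e : ℕ → ℕ)

def blockStart : ℕ → ℕ
  | 0 => 0
  | n + 1 => blockStart n + e n + 1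

theorem blockStart_succ (n : ℕ) : blockStart e (n + 1) = blockStart e n + e n + 1 := rfl

theorem blockStart_strictMono : StrictMono (blockStart e) :=
  strictMono_nat_of_lt_succ fun n => by rw [blockStart_succ]; omega

theorem exists_lt_blockStart_succ (m : ℕ) : ∃ n, m < blockStart e (n + 1) :=
  ⟨m, (blockStart_strictMono e).le_apply⟩

def blockIndex (m : ℕ) : ℕ := Nat.find (exists_lt_blockStart_succ e m)

/-- Bit `n` of `X` occupies the block `[blockStart e n, blockStart e (n + 1))` of `e n + 1`
positions. -/
def padding (X : ℕ → Bool) : Set ℕ := {m | X (blockIndex e m) = true}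

theorem blockIndex_eq_iff {m n : ℕ} :
    blockIndex e m = n ↔ blockStart e n ≤ m ∧ m < blockStart e (n + 1) := by
  rw [blockIndex, Nat.find_eq_iff]
  constructor
  · rintro ⟨hlt, hmin⟩
    refine ⟨?_, hlt⟩
    cases n with
    | zero => exact Nat.zero_le m
    | succ k => exact not_lt.1 (hmin k k.lt_succ_self)
  · rintro ⟨hle, hlt⟩
    exact ⟨hlt, fun k hk => not_lt.2 (((blockStart_strictMono e).monotone hk).trans hle)⟩

theorem blockIndex_blockStart_add {n r : ℕ} (hr : r ≤ e n) :
    blockIndex e (blockStart e n + r) = n :=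
  (blockIndex_eq_iff e).2 ⟨Nat.le_add_right _ _, by rw [blockStart_succ]; omega⟩

theorem blockIndex_blockStart (n : ℕ) : blockIndex e (blockStart e n) = n :=
  blockIndex_blockStart_add e (Nat.zero_le _)

variable {e}

theorem computable_blockStart (he : Computable e) : Computable (blockStart e) := by
  have hstep : Computable₂ fun (_ : ℕ) (p : ℕ × ℕ) => p.2 + e p.1 + 1 :=
    (Computable.succ.comp (Primrec.nat_add.to_comp.comp (Computable.snd.comp .snd)
      (he.comp (Computable.fst.comp .snd)))).to₂
  refine (Computable.nat_rec .id (Computable.const 0) hstep).of_eq fun n => ?_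
  induction n with
  | zero => rfl
  | succ n ih => simp only [id] at ih ⊢; rw [ih, blockStart_succ]

theorem computable_blockIndex (he : Computable e) : Computable (blockIndex e) :=
  Computable.find (P := fun m n => m < blockStart e (n + 1))
    (Primrec.nat_lt.computablePred_comp .fst
      ((computable_blockStart he).comp (Computable.succ.comp .snd)))
    (exists_lt_blockStart_succ e)

theorem manyOneEquiv_padding (he : Computable e) (X : ℕ → Bool) :
    ManyOneEquiv (· ∈ padding e X) (fun n => X n = true) :=
  ⟨⟨blockIndex e, computable_blockIndex he, fun _ => Iff.rfl⟩,
    ⟨blockStart e, computable_blockStart he, fun n => by simp [padding, blockIndex_blockStart]⟩⟩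

theorem exists_blockIndex_ne {e' f : ℕ → ℕ} (hf : Injective f) {n : ℕ} (h : e' n < e n) :
    ∃ r ≤ e n, blockIndex e' (f (blockStart e n + r)) ≠ n := by
  by_contra! hall
  have hmaps : Set.MapsTo (fun r => f (blockStart e n + r)) (Finset.range (e n + 1))
      (Finset.Ico (blockStart e' n) (blockStart e' (n + 1))) := fun r hr =>
    Finset.mem_Ico.2 <| (blockIndex_eq_iff e').1 <|
      hall r (Nat.lt_succ_iff.1 (Finset.mem_range.1 hr))
  have hinj : Set.InjOn (fun r => f (blockStart e n + r)) (Finset.range (e n + 1)) :=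
    fun r _ s _ hrs => Nat.add_left_cancel (hf hrs)
  have hcard := Finset.card_le_card_of_injOn _ hmaps hinj
  rw [Finset.card_range, Nat.card_Ico, blockStart_succ] at hcard
  omega

theorem exists_computable_escape {e' : ℕ → ℕ} (he : Computable e) (he' : Computable e')
    {X : ℕ → Bool} (hred : (· ∈ padding e X) ≤₁ (· ∈ padding e' X)) :
    ∃ g : ℕ → ℕ, Computable g ∧ ∀ n, e' n < e n → g n ≠ n ∧ X (g n) = X n := by
  classical
  obtain ⟨f, hf, hinj, hfX⟩ := hred
  have hfb : Computable fun p : ℕ × ℕ => blockIndex e' (f (blockStart e p.1 + p.2)) :=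
    (computable_blockIndex he').comp <| hf.comp <|
      Primrec.nat_add.to_comp.comp ((computable_blockStart he).comp .fst) .snd
  -- The search for an offset `r` whose image leaves block `n` is cut off at `e n + 1`, past the
  -- end of the block, so that it always terminates.
  let Escape n r := ¬(r ≤ e n ∧ blockIndex e' (f (blockStart e n + r)) = n)
  have hEscape : ∀ n, ∃ r, Escape n r := fun n => ⟨e n + 1, fun h => by omega⟩
  have hEscape_comp : ComputablePred fun p : ℕ × ℕ => Escape p.1 p.2 :=
    ((Primrec.nat_le.computablePred_comp .snd (he.comp .fst)).and
      (Primrec.eq.computablePred_comp hfb .fst)).not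
  let r₀ n := Nat.find (hEscape n)
  refine ⟨fun n => blockIndex e' (f (blockStart e n + r₀ n)),
    hfb.comp (Computable.id.pair (Computable.find hEscape_comp hEscape)), fun n hn => ?_⟩
  obtain ⟨r, hr, hne⟩ := exists_blockIndex_ne hinj hn
  have hr₀ : r₀ n ≤ e n := (Nat.find_min' (hEscape n) fun h => hne h.2).trans hr
  refine ⟨fun h => Nat.find_spec (hEscape n) ⟨hr₀, h⟩, ?_⟩
  have hiff := hfX (blockStart e n + r₀ n)
  simp only [padding, Set.mem_ofPred_eq, blockIndex_blockStart_add e hr₀] at hiff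
  exact (Bool.eq_iff_iff.2 hiff).symm

end Padding

def columnIndicator (i n : ℕ) : ℕ := if n.unpair.1 = i then 1 else 0

theorem computable_columnIndicator (i : ℕ) : Computable (columnIndicator i) :=
  (Primrec.ite (Primrec.eq.comp (Primrec.fst.comp Primrec.unpair) (Primrec.const i))
    (Primrec.const 1) (Primrec.const 0)).to_comp

theorem frequently_columnIndicator_lt {i j : ℕ} (hij : i ≠ j) :
    ∃ᶠ n in atTop, columnIndicator j n < columnIndicator i n :=
  frequently_atTop.2 fun N => ⟨Nat.pair i N, Nat.right_le_pair i N, by simp [columnIndicator, hij]⟩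

/-- If `A` is Martin-Löf random, then the many-one degree of `A` contains an
infinite antichain of 1-degrees. -/
theorem stmt_16 (μ : Measure (ℕ → Bool)) (hμ : IsFairCoin μ)
    (A : ℕ → Bool) (hA : MLRandom μ A) :
    ∃ B : ℕ → Set ℕ,
      (∀ i, ManyOneEquiv (· ∈ B i) (fun n => A n = true)) ∧
      (∀ i j, i ≠ j → ¬ OneOneReducible (· ∈ B i) (· ∈ B j)) := by
  refine ⟨fun i => padding (columnIndicator i) A,
    fun i => manyOneEquiv_padding (computable_columnIndicator i) A, fun i j hij hred => ?_⟩
  obtain ⟨g, hg, hgA⟩ := exists_computable_escape (computable_columnIndicator i)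
    (computable_columnIndicator j) hred
  exact hμ.not_mlRandom_of_correlated (Primrec.nat_lt.computablePred_comp
    (computable_columnIndicator j) (computable_columnIndicator i))
    (frequently_columnIndicator_lt hij) hg hgA hA
end

section
/- If A ∈ 2^ω is 1-generic, then the many-one degree of A contains an infinite antichain of 1-degrees: there is a family (B_i)_{i∈ω} of subsets of ω with B_i ≡_m A for all i and B_i ≰_1 B_j for all i ≠ j. -/
/-!
Let `F i` be a set of `i` elements of `A` and `B i = A \ F i`. By genericity `A` is infinite and
has a non-element, so a finite change does not move it out of its m-degree. If a computable
injection `f` witnessed `B i ≤₁ B j`, consider the c.e. set of strings putting some large `x`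
into `A` and `f x` out of it. `A` cannot meet it, so some initial segment of `A` has no extension
in it; as any `x` with `f x ≠ x` and `x`, `f x` large yields such an extension, `f` moves only
finitely many points. Then `f` permutes a finite `S ⊇ F i ∪ F j` carrying `S ∩ B i` onto
`S ∩ B j`, so `|S ∩ A| - i = |S ∩ A| - j`.
-/

/-- The initial segment `X↾n` of `X ∈ 2^ω`, as a finite binary string. -/
def restrictN (X : ℕ → Bool) (n : ℕ) : List Bool := (List.range n).map X

/-- `X ∈ 2^ω` is 1-generic: for every c.e. set `W` of finite binary strings
there is `n` such that either `X↾n ∈ W`, or no extension of `X↾n` is in `W`. -/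
def OneGeneric (X : ℕ → Bool) : Prop :=
  ∀ W : List Bool → Prop, REPred W →
    ∃ n, W (restrictN X n) ∨ ∀ τ : List Bool, restrictN X n <+: τ → ¬ W τ

open Filter Function Set

theorem REPred.exists_of_computablePred {α : Type*} [Primcodable α] {p : α → ℕ → Prop}
    (hp : ComputablePred fun a : α × ℕ => p a.1 a.2) : REPred fun a => ∃ n, p a n := by
  classical
  have hfind : Partrec fun a => Nat.rfind fun n => Part.some (decide (p a n)) :=
    Partrec.rfind (hp.decide.comp (Computable.pair Computable.fst Computable.snd)).partrec
  refine hfind.dom_re.of_eq fun a => (Nat.rfind_dom).trans ⟨?_, ?_⟩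
  · rintro ⟨n, hn, -⟩
    exact ⟨n, by simpa using hn⟩
  · rintro ⟨n, hn⟩
    exact ⟨n, by simpa using hn, fun _ => trivial⟩

theorem Computable.of_eventuallyEq_cofinite {β : Type*} [Primcodable β] {f g : ℕ → β}
    (hg : Computable g) (hfg : f =ᶠ[cofinite] g) : Computable f := by
  obtain ⟨N, hN⟩ := eventually_atTop.1 (Nat.cofinite_eq_atTop ▸ hfg)
  have hlookup : Computable fun x => ((List.range N).map f)[x]?.getD (g x) :=
    Computable.option_getD (Computable.list_getElem?.comp (Computable.const _) Computable.id) hg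
  refine hlookup.of_eq fun x => ?_
  rcases lt_or_ge x N with hx | hx
  · simp [hx]
  · rw [List.getElem?_eq_none (by simpa using hx)]
    simp [hN x hx]

theorem manyOneReducible_of_finite_symmDiff {P Q : Set ℕ} (hPQ : (symmDiff P Q).Finite)
    {y₁ y₀ : ℕ} (hy₁ : y₁ ∈ Q) (hy₀ : y₀ ∉ Q) : ManyOneReducible (· ∈ P) (· ∈ Q) := by
  classical
  refine ⟨fun x => if x ∈ symmDiff P Q then (if x ∈ P then y₁ else y₀) else x,
    Computable.of_eventuallyEq_cofinite Computable.id ?_, fun x => ?_⟩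
  · filter_upwards [hPQ.eventually_cofinite_notMem] with x hx using if_neg hx
  · by_cases hx : x ∈ symmDiff P Q <;> by_cases hxP : x ∈ P <;>
      simp_all [Set.mem_symmDiff]

theorem ncard_eq_of_preimage_sdiff {α : Type*} {f : α → α} (hf : Injective f)
    (hfix : ∀ᶠ x in cofinite, f x = x) {P F G : Set α} (hF : F.Finite) (hG : G.Finite)
    (hFP : F ⊆ P) (hGP : G ⊆ P) (hfPG : f ⁻¹' (P \ G) = P \ F) : F.ncard = G.ncard := by
  set S := {x | f x ≠ x} ∪ F ∪ G
  have hS : S.Finite := ((eventually_cofinite.1 hfix).union hF).union hG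
  have hmaps : MapsTo f S S := by
    intro x hx
    by_cases hfx : f x = x
    · rwa [hfx]
    · exact Or.inl (Or.inl fun h => hfx (hf h))
  have himage : f '' S = S := ((hS.injOn_iff_bijOn_of_mapsTo hmaps).1 hf.injOn).image_eq
  have hcount : (S ∩ (P \ F)).ncard = (S ∩ (P \ G)).ncard := by
    rw [← hfPG, ← ncard_image_of_injective _ hf, image_inter_preimage, himage]
  have hFS : F ⊆ S ∩ P := fun x hx => ⟨Or.inl (Or.inr hx), hFP hx⟩
  have hGS : G ⊆ S ∩ P := fun x hx => ⟨Or.inr hx, hGP hx⟩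
  rw [← inter_sdiff_assoc, ← inter_sdiff_assoc] at hcount
  have := ncard_sdiff_add_ncard_of_subset hFS (hS.inter_of_left P)
  have := ncard_sdiff_add_ncard_of_subset hGS (hS.inter_of_left P)
  omega

theorem restrictN_getD (X : ℕ → Bool) (n k : ℕ) (d : Bool) :
    (restrictN X n).getD k d = if k < n then X k else d := by
  split_ifs with h <;> simp [restrictN, h]

theorem restrictN_prefix {X Y : ℕ → Bool} {n L : ℕ} (hXY : ∀ k < n, X k = Y k) (hnL : n ≤ L) :
    restrictN X n <+: restrictN Y L := by
  have : restrictN X n = restrictN Y n :=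
    List.map_congr_left fun k hk => hXY k (List.mem_range.1 hk)
  rw [this, List.prefix_iff_eq_take, restrictN, restrictN, List.length_map, List.length_range,
    ← List.map_take, List.take_range, min_eq_left hnL]

theorem OneGeneric.meets_or_avoids {X : ℕ → Bool} (hX : OneGeneric X) {W : List Bool → Prop}
    (hW : REPred W) :
    ∃ n, W (restrictN X n) ∨
      ∀ Y L, (∀ k < n, X k = Y k) → n ≤ L → ¬ W (restrictN Y L) := by
  obtain ⟨n, hn⟩ := hX W hW
  exact ⟨n, hn.imp_right fun h Y L hXY hnL => h _ (restrictN_prefix hXY hnL)⟩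

theorem OneGeneric.infinite_setOf_eq {X : ℕ → Bool} (hX : OneGeneric X) (b : Bool) :
    {m | X m = b}.Infinite := by
  refine infinite_of_forall_exists_gt fun k => ?_
  have hW : REPred fun σ : List Bool => ∃ m, k < m ∧ σ.getD m (!b) = b :=
    REPred.exists_of_computablePred <| PrimrecPred.computablePred <|
      (Primrec.nat_lt.comp (Primrec.const k) Primrec.snd).and
        (Primrec.eq.comp ((Primrec.list_getD _).comp Primrec.fst Primrec.snd) (Primrec.const b))
  obtain ⟨n, ⟨m, hkm, hm⟩ | havoid⟩ := hX.meets_or_avoids hW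
  · rw [restrictN_getD] at hm
    split_ifs at hm
    · exact ⟨m, hm, hkm⟩
    · cases b <;> simp at hm
  · refine (havoid (update X (max n (k + 1)) b) (max n (k + 1) + 1) (fun j hj => ?_) (by omega)
      ⟨max n (k + 1), by omega, by rw [restrictN_getD, if_pos (by omega), update_self]⟩).elim
    rw [update_of_ne (by omega)]

theorem OneGeneric.eventually_eq_self_of_preserves {X : ℕ → Bool} (hX : OneGeneric X)
    {f : ℕ → ℕ} (hf : Computable f) (hinj : Injective f)
    (hfX : ∀ᶠ x in cofinite, X x = true → X (f x) = true) : ∀ᶠ x in cofinite, f x = x := by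
  rw [Nat.cofinite_eq_atTop] at hfX ⊢
  obtain ⟨N, hN⟩ := eventually_atTop.1 hfX
  have hW : REPred fun σ : List Bool =>
      ∃ x, N ≤ x ∧ σ.getD x false = true ∧ σ.getD (f x) true = false := by
    refine REPred.exists_of_computablePred <| ComputablePred.computable_iff.2
      ⟨fun a => decide (N ≤ a.2) && a.1.getD a.2 false && !a.1.getD (f a.2) true, ?_, ?_⟩
    · exact Primrec.and.to_comp.comp
        (Primrec.and.to_comp.comp
          (Primrec.nat_le.decide.comp (Primrec.const N) Primrec.snd).to_comp
          ((Primrec.list_getD false).comp Primrec.fst Primrec.snd).to_comp)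
        (Primrec.not.to_comp.comp
          ((Primrec.list_getD true).to_comp.comp Computable.fst (hf.comp Computable.snd)))
    · funext a
      simp [and_assoc]
  obtain ⟨n, ⟨x, hNx, hx, hfx⟩ | havoid⟩ := hX.meets_or_avoids hW
  · rw [restrictN_getD] at hx hfx
    split_ifs at hx hfx
    exact absurd (hN x hNx hx) (by simp [hfx])
  · have hfTop : Tendsto f atTop atTop := Nat.cofinite_eq_atTop ▸ hinj.tendsto_cofinite
    filter_upwards [eventually_ge_atTop (max n N), hfTop.eventually_ge_atTop n] with x hx hfx
    by_contra hne
    refine havoid (update (update X (f x) false) x true) (max x (f x) + 1) (fun k hk => ?_)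
      (by omega) ⟨x, by omega, ?_, ?_⟩
    · rw [update_of_ne (by omega), update_of_ne (by omega)]
    · rw [restrictN_getD, if_pos (by omega), update_self]
    · rw [restrictN_getD, if_pos (by omega), update_of_ne hne, update_self]

/-- If `A` is 1-generic, then the many-one degree of `A` contains an infinite
antichain of 1-degrees. -/
theorem stmt_19 (A : ℕ → Bool) (hA : OneGeneric A) :
    ∃ B : ℕ → Set ℕ,
      (∀ i, ManyOneEquiv (· ∈ B i) (fun n => A n = true)) ∧
      (∀ i j, i ≠ j → ¬ OneOneReducible (· ∈ B i) (· ∈ B j)) := by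
  set P := {n | A n = true}
  have hP : P.Infinite := hA.infinite_setOf_eq true
  obtain ⟨y₀, hy₀⟩ := (hA.infinite_setOf_eq false).nonempty
  have hy₀P : y₀ ∉ P := by simp [P, hy₀.out]
  choose F hFP hF hFcard using hP.exists_subset_ncard_eq
  have hsymm : ∀ i, (symmDiff (P \ F i) P).Finite := fun i =>
    (hF i).subset fun x hx => by simp only [Set.mem_symmDiff, Set.mem_sdiff] at hx; tauto
  refine ⟨fun i => P \ F i, fun i => ⟨?_, ?_⟩, fun i j hij ⟨f, hf, hinj, hred⟩ => hij ?_⟩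
  · exact manyOneReducible_of_finite_symmDiff (hsymm i) hP.nonempty.some_mem hy₀P
  · exact manyOneReducible_of_finite_symmDiff (symmDiff_comm (P \ F i) P ▸ hsymm i)
      (hP.sdiff (hF i)).nonempty.some_mem fun h => hy₀P h.1
  · have hfix : ∀ᶠ x in cofinite, f x = x := hA.eventually_eq_self_of_preserves hf hinj <| by
      filter_upwards [(hF i).eventually_cofinite_notMem] with x hx hAx
      exact ((hred x).1 ⟨hAx, hx⟩).1
    rw [← hFcard i, ← hFcard j]
    exact ncard_eq_of_preimage_sdiff hinj hfix (hF i) (hF j) (hFP i) (hFP j)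
      (Set.ext fun x => (hred x).symm)
end
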